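/- arXiv:1303.6704 — 7 statements merged into one kernel-verified Lean document; each statement's English description precedes it below -/
import Mathlib

section
/- Let F be an infinite field and n ≥ 1. The algebra Mₙ(F) satisfies no polynomial identity of degree less than 2n: for every finite set X of non-commuting variables and every nonzero element f of the free F-algebra F⟨X⟩ of degree strictly less than 2n, there exists a valuation v : X → Mₙ(F) whose induced F-algebra homomorphism F⟨X⟩ → Mₙ(F) does not send f to 0. -/
/-!
Substitute for each letter `x` the staircase matrix whose entries `(i, i)` and `(i, i + 1)` are
the commuting indeterminates `t (x, 2 i)` and `t (x, 2 i + 1)`. A word `x₀ ⋯ x_{m-1}` with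
`m < 2n` is then recovered from the image of `f` as the coefficient of
`t (x₀, 0) ⋯ t (x_{m-1}, m - 1)` in the entry `(0, m / 2)`: a product of staircase matrices
starting in row `i` only involves indeterminates of index `≥ 2 i`, which forces the `k`-th
letter to use `t (·, k)`. So the image of `f ≠ 0` is a nonzero matrix of polynomials, and
over an infinite field some specialisation of the indeterminates keeps it nonzero.
-/

section

open MvPolynomial

variable {R : Type*} [CommSemiring R] {α : Type*}

theorem FreeAlgebra.lift_apply_eq_sum_prod {A : Type*} [Semiring A] [Algebra R A] (v : α → A)
    (f : FreeAlgebra R α) :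
    lift R v f = (equivMonoidAlgebraFreeMonoid f).coeff.sum
      fun w c => c • ((FreeMonoid.toList w).map v).prod := by
  have : lift R v = (MonoidAlgebra.lift R A (FreeMonoid α) (FreeMonoid.lift v)).comp
      (equivMonoidAlgebraFreeMonoid : FreeAlgebra R α ≃ₐ[R] _).toAlgHom := by
    ext x; simp [equivMonoidAlgebraFreeMonoid]
  simp [this, MonoidAlgebra.lift_apply, FreeMonoid.lift_apply]

theorem FreeAlgebra.exists_lift_ne_zero_of_lift_mvPolynomial_ne_zero {K m σ : Type*} [CommRing K]
    [IsDomain K] [Infinite K] [Fintype m] [DecidableEq m] {f : FreeAlgebra K α}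
    (u : α → Matrix m m (MvPolynomial σ K)) (h : lift K u f ≠ 0) :
    ∃ v : α → Matrix m m K, lift K v f ≠ 0 := by
  obtain ⟨i, j, hij⟩ : ∃ i j, lift K u f i j ≠ 0 := by
    by_contra! h0
    exact h (Matrix.ext h0)
  obtain ⟨c, hc⟩ : ∃ c, eval c (lift K u f i j) ≠ 0 := by
    by_contra! h0
    exact hij (MvPolynomial.funext fun c => by simp [h0 c])
  have hlift : lift K (fun x => (aeval c).mapMatrix (u x)) =
      (aeval c).mapMatrix.comp (lift K u) := by
    ext x; simp
  refine ⟨fun x => (aeval c).mapMatrix (u x), fun h0 => hc ?_⟩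
  rw [hlift] at h0
  simpa using congrFun (congrFun h0 i) j

/-- `t (l₀, a) * t (l₁, a + 1) * ⋯`: every letter of `l` is tagged with its position. -/
noncomputable def wordMonomial : List α → ℕ → (α × ℕ →₀ ℕ)
  | [], _ => 0
  | x :: l, a => Finsupp.single (x, a) 1 + wordMonomial l (a + 1)

theorem le_of_mem_support_wordMonomial {l : List α} {a : ℕ} {p : α × ℕ}
    (hp : p ∈ (wordMonomial l a).support) : a ≤ p.2 := by
  classical
  induction l generalizing a with
  | nil => simp [wordMonomial] at hp
  | cons x t ih =>
    rcases Finset.mem_union.mp (Finsupp.support_add hp) with h | h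
    · rw [(Finsupp.mem_support_single _ _ _).mp h |>.1]
    · exact (ih h).trans' (Nat.le_succ a)

theorem wordMonomial_cons_apply_of_le [DecidableEq α] {x y : α} {t : List α} {a k : ℕ}
    (hk : k ≤ a) : wordMonomial (y :: t) a (x, k) = if x = y ∧ k = a then 1 else 0 := by
  have : wordMonomial t (a + 1) (x, k) = 0 :=
    Finsupp.notMem_support_iff.mp fun h => by
      have := le_of_mem_support_wordMonomial h; simp at this; omega
  simp [wordMonomial, this, Finsupp.single_apply, eq_comm]

theorem coeff_wordMonomial_X_mul [DecidableEq α] {l : List α} {a k : ℕ} {x : α}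
    {P : MvPolynomial (α × ℕ) R} (hP : ∀ p ∈ P.vars, k ≤ p.2) :
    coeff (wordMonomial l a) (X (x, k) * P) =
      if l.head? = some x ∧ k = a then coeff (wordMonomial l.tail (a + 1)) P else 0 := by
  rw [coeff_X_mul']
  cases l with
  | nil => simp [wordMonomial]
  | cons y t =>
    split_ifs with hmem hxk hxk
    · obtain ⟨hx, rfl⟩ := hxk
      simp only [List.head?_cons, Option.some.injEq] at hx
      subst hx
      simp [wordMonomial]
    · by_contra hne
      have hlt : a < k := by
        refine lt_of_le_of_ne (le_of_mem_support_wordMonomial hmem) fun hak => hxk ?_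
        subst hak
        rw [Finsupp.mem_support_iff, wordMonomial_cons_apply_of_le le_rfl] at hmem
        simp_all
      have hya : (y, a) ∈ P.vars := (mem_vars_iff_mem_support _).mpr
        ⟨_, mem_support_iff.mpr hne, by simp [wordMonomial_cons_apply_of_le le_rfl, hlt.ne']⟩
      exact absurd (hP _ hya) (not_le.mpr hlt)
    · obtain ⟨hx, rfl⟩ := hxk
      simp only [List.head?_cons, Option.some.injEq] at hx
      subst hx
      simp [wordMonomial] at hmem
    · rfl

variable (R) in
/-- The index `i + j` numbers the staircase `(0,0), (0,1), (1,1), …, (n-1,n-1)` from `0` to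
`2n - 2`. -/
noncomputable def staircaseMatrix (n : ℕ) (x : α) :
    Matrix (Fin n) (Fin n) (MvPolynomial (α × ℕ) R) :=
  Matrix.of fun i j => if (i : ℕ) ≤ j ∧ (j : ℕ) ≤ i + 1 then X (x, i + j) else 0

theorem le_of_mem_vars_prod_staircaseMatrix {n : ℕ} (l : List α) (i j : Fin n) {p : α × ℕ}
    (hp : p ∈ ((l.map (staircaseMatrix R n)).prod i j).vars) : 2 * (i : ℕ) ≤ p.2 := by
  classical
  induction l generalizing i with
  | nil =>
    rw [List.map_nil, List.prod_nil, Matrix.one_apply] at hp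
    split_ifs at hp <;> simp at hp
  | cons x t ih =>
    rw [List.map_cons, List.prod_cons, Matrix.mul_apply] at hp
    obtain ⟨k, -, hk⟩ := Finset.mem_biUnion.mp (vars_sum_subset _ _ hp)
    simp only [staircaseMatrix, Matrix.of_apply] at hk
    split_ifs at hk with hik
    · rcases Finset.mem_union.mp (vars_mul _ _ hk) with hx | hP
      · have : p = (x, (i : ℕ) + k) := by
          rcases subsingleton_or_nontrivial R with _ | _
          · simp [Subsingleton.elim (X _ : MvPolynomial (α × ℕ) R) 0] at hx
          · rwa [vars_X, Finset.mem_singleton] at hx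
        subst this; simp only; omega
      · have := ih k hP; omega
    · simp at hk

theorem coeff_wordMonomial_prod_staircaseMatrix_cons [DecidableEq α] {n : ℕ} (l t : List α)
    (x : α) (a : ℕ) (i j : Fin n) :
    coeff (wordMonomial l a) (((x :: t).map (staircaseMatrix R n)).prod i j) =
      ∑ k : Fin n,
        if (i : ℕ) ≤ k ∧ (k : ℕ) ≤ i + 1 ∧ l.head? = some x ∧ i + k = a then
          coeff (wordMonomial l.tail (a + 1)) ((t.map (staircaseMatrix R n)).prod k j)
        else 0 := by
  rw [List.map_cons, List.prod_cons, Matrix.mul_apply, coeff_sum]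
  refine Finset.sum_congr rfl fun k _ => ?_
  simp only [staircaseMatrix, Matrix.of_apply]
  by_cases hik : (i : ℕ) ≤ k ∧ (k : ℕ) ≤ i + 1
  · rw [if_pos hik, coeff_wordMonomial_X_mul]
    · simp only [hik, true_and]
    intro p hp
    have := le_of_mem_vars_prod_staircaseMatrix t k j hp
    omega
  · rw [if_neg hik, if_neg (by tauto), zero_mul, coeff_zero]

theorem eq_of_coeff_wordMonomial_prod_staircaseMatrix_ne_zero {n : ℕ} {l l' : List α} {a : ℕ}
    {i j : Fin n} (h : coeff (wordMonomial l a) ((l'.map (staircaseMatrix R n)).prod i j) ≠ 0) :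
    l' = l := by
  classical
  induction l' generalizing l a i with
  | nil =>
    cases l with
    | nil => rfl
    | cons y t =>
      refine absurd ?_ h
      have hne : wordMonomial (y :: t) a ≠ 0 := fun h0 => by
        simpa [wordMonomial_cons_apply_of_le le_rfl] using DFunLike.congr_fun h0 (y, a)
      rw [List.map_nil, List.prod_nil, Matrix.one_apply]
      split_ifs <;> simp [coeff_one, hne.symm]
  | cons x t ih =>
    rw [coeff_wordMonomial_prod_staircaseMatrix_cons] at h
    obtain ⟨k, -, hk⟩ := Finset.exists_ne_zero_of_sum_ne_zero h
    split_ifs at hk with hcond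
    swap
    · exact absurd rfl hk
    obtain ⟨-, -, hx, -⟩ := hcond
    cases l with
    | nil => simp at hx
    | cons y u =>
      obtain rfl : y = x := by simpa using hx
      rw [ih hk]; rfl

theorem coeff_wordMonomial_prod_staircaseMatrix_self {n : ℕ} (l : List α) {a : ℕ} {i j : Fin n}
    (hi : (i : ℕ) = a / 2) (hj : (j : ℕ) = (a + l.length) / 2) :
    coeff (wordMonomial l a) ((l.map (staircaseMatrix R n)).prod i j) = 1 := by
  classical
  induction l generalizing a i with
  | nil =>
    obtain rfl : i = j := Fin.ext (by simp_all)
    simp [wordMonomial]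
  | cons x t ih =>
    have hk : (a + 1) / 2 < n := by simp only [List.length_cons] at hj; omega
    rw [coeff_wordMonomial_prod_staircaseMatrix_cons, Finset.sum_eq_single ⟨(a + 1) / 2, hk⟩]
    · rw [if_pos (by refine ⟨?_, ?_, rfl, ?_⟩ <;> dsimp only <;> omega)]
      exact ih (by simp) (by simp only [List.length_cons] at hj; omega)
    · intro k _ hk
      rw [if_neg]
      rintro ⟨-, -, -, h⟩
      exact hk (Fin.ext (by simp only; omega))
    · simp

theorem coeff_wordMonomial_lift_staircaseMatrix {n : ℕ} (f : FreeAlgebra R α) (w : FreeMonoid α)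
    {i j : Fin n} (hi : (i : ℕ) = 0) (hj : (j : ℕ) = w.length / 2) :
    coeff (wordMonomial w.toList 0) (FreeAlgebra.lift R (staircaseMatrix R n) f i j) =
      (FreeAlgebra.equivMonoidAlgebraFreeMonoid f).coeff w := by
  classical
  rw [FreeAlgebra.lift_apply_eq_sum_prod, Finsupp.sum, Matrix.sum_apply, coeff_sum,
    Finset.sum_eq_single w]
  · rw [Matrix.smul_apply, coeff_smul, coeff_wordMonomial_prod_staircaseMatrix_self _
      (by rw [hi]) (by rw [hj, zero_add]; rfl), smul_eq_mul, mul_one]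
  · intro w' _ hw'
    rw [Matrix.smul_apply, coeff_smul, smul_eq_mul, mul_eq_zero_of_right]
    by_contra h
    exact hw' <| FreeMonoid.toList.injective <|
      eq_of_coeff_wordMonomial_prod_staircaseMatrix_ne_zero h
  · intro hw
    rw [Finsupp.notMem_support_iff.mp hw, zero_smul, Matrix.zero_apply, coeff_zero]

end

theorem no_identity_of_degree_lt_two_mul_general (F : Type*) [Field F] [Infinite F]
    (n : ℕ) (X : Type*) (f : FreeAlgebra F X)
    (hf : f ≠ 0)
    (hdeg : ∀ w ∈ (FreeAlgebra.equivMonoidAlgebraFreeMonoid (R := F) (X := X) f).coeff.support,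
      FreeMonoid.length w < 2 * n) :
    ∃ v : X → Matrix (Fin n) (Fin n) F, FreeAlgebra.lift F v f ≠ 0 := by
  obtain ⟨w, hw⟩ :
      (FreeAlgebra.equivMonoidAlgebraFreeMonoid (R := F) (X := X) f).coeff.support.Nonempty := by
    simpa using hf
  have hlen := hdeg w hw
  refine FreeAlgebra.exists_lift_ne_zero_of_lift_mvPolynomial_ne_zero (staircaseMatrix F n)
    fun h => Finsupp.mem_support_iff.mp hw ?_
  rw [← coeff_wordMonomial_lift_staircaseMatrix f w (i := (⟨0, by omega⟩ : Fin n))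
    (j := (⟨w.length / 2, by omega⟩ : Fin n)) rfl rfl, h, Matrix.zero_apply,
    MvPolynomial.coeff_zero]

/-- **Amitsur–Levitzki theorem (minimality assertion).**
Let `F` be an infinite field and `n ≥ 1`.  The matrix algebra `Mₙ(F)` satisfies no
polynomial identity of degree less than `2n`: for every finite set `X` of
non-commuting variables and every nonzero element `f` of the free algebra `F⟨X⟩`
all of whose monomials (words in the support of the corresponding element of the
monoid algebra of the free monoid on `X`) have length strictly less than `2n`,
there is a valuation `v : X → Mₙ(F)` whose induced `F`-algebra homomorphism
`F⟨X⟩ → Mₙ(F)` does not send `f` to `0`. -/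
theorem no_identity_of_degree_lt_two_mul (F : Type*) [Field F] [Infinite F]
    (n : ℕ) (hn : 1 ≤ n) (X : Type*) [Fintype X] (f : FreeAlgebra F X)
    (hf : f ≠ 0)
    (hdeg : ∀ w ∈ (FreeAlgebra.equivMonoidAlgebraFreeMonoid (R := F) (X := X) f).coeff.support,
      FreeMonoid.length w < 2 * n) :
    ∃ v : X → Matrix (Fin n) (Fin n) F, FreeAlgebra.lift F v f ≠ 0 :=
  no_identity_of_degree_lt_two_mul_general F n X f hf hdeg
end

section
/- Let F be an infinite field, X = (X₁, …, X_k) a tuple of pairwise disjoint sets of variables, n ≥ 1, and f ∈ F⟨X₁⟩ ⊗_F ⋯ ⊗_F F⟨X_k⟩. If for every valuation v = (v₁, …, v_k) with vᵢ : Xᵢ → Mₙ(F) the induced homomorphism ṽ = ṽ₁ ⊗ ⋯ ⊗ ṽ_k sends f to 0 in Mₙ(F) ⊗_F ⋯ ⊗_F Mₙ(F), then Φₙ(f) = (Φₙ^{X₁} ⊗ ⋯ ⊗ Φₙ^{X_k})(f) = 0. -/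
/-! Every valuation `vᵢ : Xᵢ → Mₙ(F)` factors through the generic matrices by evaluating the
entries of the generic matrices at a point, so `Φₙ(f)` is a tensor of polynomial matrices all of
whose point evaluations vanish. Taking one entry in each factor and multiplying, with the
variables of different factors kept apart, sends such a tensor injectively to a family of
polynomials in all the variables (a product of monomial basis vectors goes to a single monomial
in a single slot); these polynomials vanish at every point, hence are zero as `F` is infinite.
Finally, the inclusions `Fₙ⟨Xᵢ⟩ ⊆ Mₙ(F[t])` stay injective after tensoring over a field. -/

open scoped TensorProduct PiTensorProduct

set_option synthInstance.maxHeartbeats 1000000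
set_option maxHeartbeats 1000000

/-- The `F`-algebra homomorphism `Φₙ^X : F⟨X⟩ → Mₙ(F[t])` sending each variable
`x ∈ X` to its generic matrix `(t^{(x)}_{ij})`.  The generic matrix algebra
`Fₙ⟨X⟩` is its range. -/
noncomputable def genericMatrixHom (F : Type*) [Field F] (X : Type*) (n : ℕ) :
    FreeAlgebra F X →ₐ[F] Matrix (Fin n) (Fin n) (MvPolynomial (X × Fin n × Fin n) F) :=
  FreeAlgebra.lift F fun x => Matrix.of fun i j => MvPolynomial.X (x, i, j)

open MvPolynomial PiTensorProduct

theorem Finsupp.sigmaFinsuppEquivPiFinsupp_sum_mapDomain {η : Type*} [Fintype η]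
    {ιs : η → Type*} {α : Type*} [AddCommMonoid α] (d : Π j, ιs j →₀ α) :
    sigmaFinsuppEquivPiFinsupp (∑ j, (d j).mapDomain (Sigma.mk j)) = d := by
  classical
  ext j s
  rw [sigmaFinsuppEquivPiFinsupp_apply, finsetSum_apply, Finset.sum_eq_single j]
  · exact mapDomain_apply sigma_mk_injective _ _
  · rintro j' - hj'
    exact mapDomain_of_notMem_range _ _ fun ⟨_, h⟩ => hj' (congrArg Sigma.fst h)
  · exact fun h => absurd (Finset.mem_univ j) h

namespace PiTensorProduct

theorem map_injective {K ι : Type*} [Field K] {M N : ι → Type*} [∀ i, AddCommGroup (M i)]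
    [∀ i, Module K (M i)] [∀ i, AddCommGroup (N i)] [∀ i, Module K (N i)]
    (f : Π i, M i →ₗ[K] N i) (hf : ∀ i, Function.Injective (f i)) :
    Function.Injective (map f) := by
  choose g hg using fun i => (f i).exists_leftInverse_of_injective (LinearMap.ker_eq_bot.2 (hf i))
  refine Function.LeftInverse.injective (g := map g) fun x => ?_
  rw [← LinearMap.comp_apply, ← map_comp, funext hg, map_id, LinearMap.id_apply]

section MatrixEntryProd

variable {F ι m n B C : Type*} [CommSemiring F] [Fintype ι] {A A' : ι → Type*}
  [∀ i, AddCommMonoid (A i)] [∀ i, Module F (A i)] [∀ i, AddCommMonoid (A' i)]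
  [∀ i, Module F (A' i)] [CommSemiring B] [Algebra F B] [CommSemiring C] [Algebra F C]

noncomputable def matrixEntryProd (φ : Π i, A i →ₗ[F] B) (e : ι → m × n) :
    (⨂[F] i, Matrix m n (A i)) →ₗ[F] B :=
  lift <| (MultilinearMap.mkPiAlgebra F ι B).compLinearMap fun i =>
    φ i ∘ₗ Matrix.entryLinearMap F (A i) (e i).1 (e i).2

@[simp]
theorem matrixEntryProd_tprod (φ : Π i, A i →ₗ[F] B) (e : ι → m × n)
    (M : Π i, Matrix m n (A i)) :
    matrixEntryProd φ e (tprod F M) = ∏ i, φ i (M i (e i).1 (e i).2) := by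
  simp [matrixEntryProd]

theorem comp_matrixEntryProd (ψ : B →ₐ[F] C) (φ : Π i, A i →ₗ[F] B) (e : ι → m × n) :
    ψ.toLinearMap ∘ₗ matrixEntryProd φ e = matrixEntryProd (fun i => ψ.toLinearMap ∘ₗ φ i) e := by
  ext M
  simp [map_prod]

theorem matrixEntryProd_comp_map_mapMatrix (φ : Π i, A i →ₗ[F] B) (e : ι → m × n)
    (χ : Π i, A' i →ₗ[F] A i) :
    matrixEntryProd φ e ∘ₗ map (fun i => (χ i).mapMatrix) =
      matrixEntryProd (fun i => φ i ∘ₗ χ i) e := by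
  ext M
  simp

end MatrixEntryProd

section EntryPolynomials

variable {F ι : Type*} [CommRing F] [Fintype ι] {σ : ι → Type*} {m n : Type*}

variable (F σ m n) in
noncomputable def entryPolynomials :
    (⨂[F] i, Matrix m n (MvPolynomial (σ i) F)) →ₗ[F] (ι → m × n) → MvPolynomial (Σ i, σ i) F :=
  LinearMap.pi fun e => matrixEntryProd (fun i => (rename (Sigma.mk i)).toLinearMap) e

theorem entryPolynomials_injective [Fintype m] [Fintype n] :
    Function.Injective (entryPolynomials F σ m n) := by
  classical
  let b := Basis.piTensorProduct fun i => (basisMonomials (σ i) F).matrix m n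
  let index (c : Π i, m × n × (σ i →₀ ℕ)) : Σ _ : ι → m × n, (Σ i, σ i) →₀ ℕ :=
    ⟨fun i => ((c i).1, (c i).2.1), ∑ i, (c i).2.2.mapDomain (Sigma.mk i)⟩
  have hindex : Function.Injective index := by
    intro c c' h
    obtain ⟨hpos, hexp⟩ := Sigma.mk.inj_iff.1 h
    have hexp' := congrArg Finsupp.sigmaFinsuppEquivPiFinsupp (eq_of_heq hexp)
    simp only [Finsupp.sigmaFinsuppEquivPiFinsupp_sum_mapDomain] at hexp'
    funext i
    obtain ⟨hrow, hcol⟩ := Prod.ext_iff.1 (congrFun hpos i)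
    exact Prod.ext_iff.2 ⟨hrow, Prod.ext_iff.2 ⟨hcol, congrFun hexp' i⟩⟩
  have hb : ∀ i (t : m × n × (σ i →₀ ℕ)),
      (basisMonomials (σ i) F).matrix m n t = Matrix.single t.1 t.2.1 (monomial t.2.2 1) := by
    rintro i ⟨a, c, d⟩
    simp
  have hbasis : entryPolynomials F σ m n ∘ b =
      Pi.basis (fun _ => basisMonomials (Σ i, σ i) F) ∘ index := by
    funext c e
    simp only [Function.comp_apply, b, Basis.piTensorProduct_apply, entryPolynomials,
      LinearMap.pi_apply, matrixEntryProd_tprod, hb, coe_basisMonomials,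
      Pi.basis_apply, index]
    by_cases he : e = fun i => ((c i).1, (c i).2.1)
    · subst he
      simp [rename_monomial, monomial_sum_one]
    · obtain ⟨i, hi⟩ := Function.ne_iff.1 he
      rw [Pi.single_eq_of_ne he, Finset.prod_eq_zero (Finset.mem_univ i)]
      rw [Matrix.single_apply_of_ne, map_zero]
      exact fun h => hi (Prod.ext h.1.symm h.2.symm)
  refine LinearMap.injective_of_linearIndependent b.span_eq ?_
  rw [hbasis]
  exact (Pi.basis _).linearIndependent.comp index hindex

theorem eq_zero_of_forall_map_mapMatrix_aeval_eq_zero [IsDomain F] [Infinite F] [Fintype m]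
    [Fintype n]
    {g : ⨂[F] i, Matrix m n (MvPolynomial (σ i) F)}
    (hg : ∀ p : Π i, σ i → F, map (fun i => (aeval (p i)).toLinearMap.mapMatrix) g = 0) :
    g = 0 := by
  refine entryPolynomials_injective (funext fun e => MvPolynomial.funext fun p => ?_)
  have hcomp : ∀ i, (aeval p).toLinearMap ∘ₗ (rename (R := F) (Sigma.mk i)).toLinearMap =
      LinearMap.id ∘ₗ (aeval fun s => p ⟨i, s⟩).toLinearMap :=
    fun i => LinearMap.ext fun _ => aeval_rename _ _ _
  calc eval p (entryPolynomials F σ m n g e)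
      = (aeval p).toLinearMap (matrixEntryProd (fun i => (rename (Sigma.mk i)).toLinearMap) e g) :=
        (coe_aeval_eq_eval p ▸ rfl)
    _ = matrixEntryProd (fun _ => LinearMap.id) e
          (map (fun i => (aeval fun s => p ⟨i, s⟩).toLinearMap.mapMatrix) g) := by
      rw [← LinearMap.comp_apply, comp_matrixEntryProd, funext hcomp,
        ← matrixEntryProd_comp_map_mapMatrix, LinearMap.comp_apply]
    _ = eval p (entryPolynomials F σ m n 0 e) := by
      rw [hg, map_zero, map_zero, Pi.zero_apply, map_zero]

end EntryPolynomials

end PiTensorProduct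

theorem mapMatrix_aeval_comp_genericMatrixHom (F : Type*) [Field F] (X : Type*) (n : ℕ)
    (p : X × Fin n × Fin n → F) :
    (aeval p).mapMatrix.comp (genericMatrixHom F X n) =
      FreeAlgebra.lift F fun x => Matrix.of fun a b => p (x, a, b) := by
  ext x a b
  simp [genericMatrixHom]

theorem genericMatrixHom_tensor_eq_zero_of_forall_valuation_eq_zero_general
    (F : Type*) [Field F] [Infinite F] (k : ℕ) (X : Fin k → Type*) (n : ℕ)
    (f : ⨂[F] i, FreeAlgebra F (X i))
    (hval : ∀ v : Π i, X i → Matrix (Fin n) (Fin n) F,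
      PiTensorProduct.map (fun i => (FreeAlgebra.lift F (v i)).toLinearMap) f = 0) :
    PiTensorProduct.map
      (fun i => (genericMatrixHom F (X i) n).rangeRestrict.toLinearMap) f = 0 := by
  have hΦ : map (fun i => (genericMatrixHom F (X i) n).toLinearMap) f = 0 := by
    refine eq_zero_of_forall_map_mapMatrix_aeval_eq_zero fun p => ?_
    have hcomp : ∀ i,
        (aeval (p i)).toLinearMap.mapMatrix ∘ₗ (genericMatrixHom F (X i) n).toLinearMap =
          (FreeAlgebra.lift F fun x => Matrix.of fun a b => p i (x, a, b)).toLinearMap :=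
      fun i => by rw [← mapMatrix_aeval_comp_genericMatrixHom]; rfl
    rw [← LinearMap.comp_apply, ← map_comp, funext hcomp]
    exact hval _
  refine map_injective (fun i => (genericMatrixHom F (X i) n).range.val.toLinearMap)
    (fun i => Subtype.val_injective) ?_
  rw [map_zero, ← hΦ, ← LinearMap.comp_apply, ← map_comp]
  rfl

/-- If `f ∈ F⟨X₁⟩ ⊗_F ⋯ ⊗_F F⟨X_k⟩` (with `F` an infinite field) is sent to `0`
in `Mₙ(F) ⊗_F ⋯ ⊗_F Mₙ(F)` by the homomorphism `ṽ = ṽ₁ ⊗ ⋯ ⊗ ṽ_k` induced by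
every valuation `v = (v₁, …, v_k)` with `vᵢ : Xᵢ → Mₙ(F)`, then
`Φₙ(f) = (Φₙ^{X₁} ⊗ ⋯ ⊗ Φₙ^{X_k})(f) = 0` in `Fₙ⟨X₁⟩ ⊗_F ⋯ ⊗_F Fₙ⟨X_k⟩`. -/
theorem genericMatrixHom_tensor_eq_zero_of_forall_valuation_eq_zero
    (F : Type*) [Field F] [Infinite F] (k : ℕ) (X : Fin k → Type*) (n : ℕ) (hn : 1 ≤ n)
    (f : ⨂[F] i, FreeAlgebra F (X i))
    (hval : ∀ v : Π i, X i → Matrix (Fin n) (Fin n) F,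
      PiTensorProduct.map (fun i => (FreeAlgebra.lift F (v i)).toLinearMap) f = 0) :
    PiTensorProduct.map
      (fun i => (genericMatrixHom F (X i) n).rangeRestrict.toLinearMap) f = 0 :=
  genericMatrixHom_tensor_eq_zero_of_forall_valuation_eq_zero_general F k X n f hval
end

section
/- Let F be a field, X = (X₁, …, X_k) a tuple of pairwise disjoint sets of variables, n ≥ 1, and f ∈ F⟨X₁⟩ ⊗_F ⋯ ⊗_F F⟨X_k⟩ of degree strictly less than n. If Ψₙ(f) = (Ψₙ^{X₁} ⊗ ⋯ ⊗ Ψₙ^{X_k})(f) = 0, then f = 0. Equivalently, the restriction of Ψₙ to elements of degree less than n is injective. -/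
/-!
For a word `w` of length `ℓ < n`, the product of the superdiagonal matrices `Ψₙ(x)` along `w`
is supported on the `ℓ`-th superdiagonal, and its `(0, ℓ)` entry is the single monomial
`t^{(x₁)}_{0,1} t^{(x₂)}_{1,2} ⋯ t^{(x_ℓ)}_{ℓ-1,ℓ}`, from which `w` can be read off. Taking the
coefficient of that monomial in that entry, in each tensor factor, gives a functional that
detects the monomial `m₁ ⊗ ⋯ ⊗ m_k` among all images `Ψₙ(m'₁ ⊗ ⋯ ⊗ m'_k)`, so these images are
linearly independent as long as every `|mᵢ| < n`.
-/

open scoped TensorProduct PiTensorProduct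

/-- The `F`-algebra homomorphism `Ψₙ^X : F⟨X⟩ → Mₙ(F⟨t^{(x)}_{ij}⟩)` sending each
variable `x ∈ X` to the `n × n` matrix whose only nonzero entries are the
superdiagonal entries `t^{(x)}_{12}, …, t^{(x)}_{n−1,n}`, where the
`t^{(x)}_{ij}` (`x ∈ X`, `1 ≤ i, j ≤ n`) are non-commuting variables. -/
noncomputable def psiHom (F : Type*) [Field F] (X : Type*) (n : ℕ) :
    FreeAlgebra F X →ₐ[F] Matrix (Fin n) (Fin n) (FreeAlgebra F (X × Fin n × Fin n)) :=
  FreeAlgebra.lift F fun x => Matrix.of fun i j =>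
    if (i : ℕ) + 1 = (j : ℕ) then FreeAlgebra.ι F (x, i, j) else 0

theorem Submodule.eq_zero_of_mem_span_image_of_biorthogonal {R M ι : Type*} [CommSemiring R]
    [AddCommMonoid M] [Module R M] [DecidableEq ι] {v : ι → M} {s : Set ι} {f : M}
    (hf : f ∈ Submodule.span R (v '' s)) (Λ : s → Module.Dual R M)
    (hΛ : ∀ i : s, ∀ j ∈ s, Λ i (v j) = if j = i then 1 else 0)
    (h : ∀ i : s, Λ i f = 0) : f = 0 := by
  obtain ⟨c, hc, rfl⟩ := Finsupp.mem_span_image_iff_linearCombination R |>.mp hf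
  suffices c = 0 by simp [this]
  ext i
  by_cases hi : i ∈ s
  · rw [Finsupp.coe_zero, Pi.zero_apply, ← h ⟨i, hi⟩, Finsupp.linearCombination_apply,
      map_finsuppSum, Finsupp.sum, Finset.sum_eq_single i]
    · simp [hΛ ⟨i, hi⟩ i hi]
    · intro j hj hji
      simp [hΛ ⟨i, hi⟩ j (hc hj), hji]
    · intro hi'
      simp [Finsupp.notMem_support_iff.mp hi']
  · exact Finsupp.notMem_support_iff.mp fun hi' => hi (hc hi')

theorem FreeAlgebra.basisFreeMonoid_apply {R X : Type*} [CommSemiring R] (w : FreeMonoid X) :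
    FreeAlgebra.basisFreeMonoid R X w = FreeMonoid.lift (FreeAlgebra.ι R) w := by
  simp [FreeAlgebra.basisFreeMonoid, FreeAlgebra.equivMonoidAlgebraFreeMonoid]

namespace PsiHom

variable {n : ℕ} (F : Type*) [Field F]

/-- Wraps around modulo `n`; only values with `a + ℓ < n` ever matter. -/
def addNatMod (a : Fin n) (ℓ : ℕ) : Fin n :=
  ⟨(a + ℓ) % n, Nat.mod_lt _ a.pos⟩

lemma val_addNatMod {a : Fin n} {ℓ : ℕ} (h : a + ℓ < n) : (addNatMod a ℓ : ℕ) = a + ℓ :=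
  Nat.mod_eq_of_lt h

section Superdiagonal

variable {A : Type*} [Semiring A]

def superdiag (ℓ : ℕ) (u : Fin n → A) : Matrix (Fin n) (Fin n) A :=
  Matrix.of fun a b => if (b : ℕ) = a + ℓ then u a else 0

lemma superdiag_apply (ℓ : ℕ) (u : Fin n → A) (a b : Fin n) :
    superdiag ℓ u a b = if (b : ℕ) = a + ℓ then u a else 0 := rfl

lemma superdiag_zero_one : superdiag 0 (fun _ => (1 : A)) = (1 : Matrix (Fin n) (Fin n) A) := by
  ext a b
  simp [superdiag_apply, Matrix.one_apply, Fin.ext_iff, eq_comm]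

lemma superdiag_mul_superdiag (ℓ ℓ' : ℕ) (u u' : Fin n → A) :
    superdiag ℓ u * superdiag ℓ' u' = superdiag (ℓ + ℓ') fun a => u a * u' (addNatMod a ℓ) := by
  ext a b
  rw [Matrix.mul_apply, Finset.sum_eq_single (addNatMod a ℓ)]
  · by_cases h : (a : ℕ) + ℓ < n
    · simp [superdiag_apply, val_addNatMod h, mul_ite, Nat.add_assoc]
    · have h1 : (addNatMod a ℓ : ℕ) ≠ a + ℓ := by have := (addNatMod a ℓ).isLt; omega
      have h2 : (b : ℕ) ≠ a + (ℓ + ℓ') := by have := b.isLt; omega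
      simp [superdiag_apply, h1, h2]
  · intro c _ hc
    have : (c : ℕ) ≠ a + ℓ := fun h => hc (Fin.ext (h.trans (val_addNatMod (h ▸ c.isLt)).symm))
    simp [superdiag_apply, this]
  · simp

end Superdiagonal

section Word

variable {X : Type*}

/-- The word `t^{(x₁)}_{a,a+1} t^{(x₂)}_{a+1,a+2} ⋯` read along the superdiagonal from row `a`. -/
def pathWord (w : FreeMonoid X) : Fin n → FreeMonoid (X × Fin n × Fin n) :=
  FreeMonoid.recOn w (fun _ => 1) fun x _ p a => .of (x, a, addNatMod a 1) * p (addNatMod a 1)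

@[simp] lemma pathWord_one (a : Fin n) : pathWord (1 : FreeMonoid X) a = 1 := rfl

lemma pathWord_of_mul (x : X) (w : FreeMonoid X) (a : Fin n) :
    pathWord (.of x * w) a = .of (x, a, addNatMod a 1) * pathWord w (addNatMod a 1) := rfl

lemma map_fst_pathWord (w : FreeMonoid X) (a : Fin n) :
    FreeMonoid.map Prod.fst (pathWord w a) = w := by
  induction w using FreeMonoid.inductionOn' generalizing a with
  | one => rfl
  | of_mul x w ih => simp [pathWord_of_mul, ih]

lemma pathWord_injective (a : Fin n) : Function.Injective fun w : FreeMonoid X => pathWord w a :=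
  Function.LeftInverse.injective fun w => map_fst_pathWord w a

lemma psiHom_ι (x : X) :
    psiHom F X n (FreeAlgebra.ι F x) =
      superdiag 1 fun a => FreeAlgebra.ι F (x, a, addNatMod a 1) := by
  ext a b
  rw [psiHom, FreeAlgebra.lift_ι_apply, Matrix.of_apply, superdiag_apply]
  by_cases h : (b : ℕ) = a + 1
  · have hb : b = addNatMod a 1 := Fin.ext (by rw [h, val_addNatMod (h ▸ b.isLt)])
    subst hb
    simp [h]
  · simp [h, Ne.symm h]

lemma psiHom_lift_ι (w : FreeMonoid X) :
    psiHom F X n (FreeMonoid.lift (FreeAlgebra.ι F) w) =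
      superdiag w.length fun a => FreeMonoid.lift (FreeAlgebra.ι F) (pathWord w a) := by
  induction w using FreeMonoid.inductionOn' with
  | one => simp [← superdiag_zero_one]
  | of_mul x w ih =>
    simp only [map_mul, FreeMonoid.lift_eval_of, psiHom_ι, ih, superdiag_mul_superdiag,
      pathWord_of_mul, FreeMonoid.length_mul, FreeMonoid.length_of]

noncomputable def wordCoeff (w : FreeMonoid X) (hw : w.length < n) :
    Module.Dual F (Matrix (Fin n) (Fin n) (FreeAlgebra F (X × Fin n × Fin n))) :=
  (FreeAlgebra.basisFreeMonoid F _).coord (pathWord w ⟨0, by omega⟩) ∘ₗ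
    Matrix.entryLinearMap F _ ⟨0, by omega⟩ ⟨w.length, hw⟩

open scoped Classical in
lemma wordCoeff_psiHom_lift_ι (w : FreeMonoid X) (hw : w.length < n)
    (v : FreeMonoid X) :
    wordCoeff F w hw (psiHom F X n (FreeMonoid.lift (FreeAlgebra.ι F) v)) =
      if v = w then 1 else 0 := by
  rw [wordCoeff, LinearMap.comp_apply, Matrix.entryLinearMap_apply, psiHom_lift_ι,
    superdiag_apply]
  by_cases hlen : w.length = v.length
  · rw [Nat.zero_add, if_pos hlen, ← FreeAlgebra.basisFreeMonoid_apply,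
      Module.Basis.coord_apply, Module.Basis.repr_self, Finsupp.single_apply,
      (pathWord_injective _).eq_iff]
  · rw [Nat.zero_add, if_neg hlen, map_zero, if_neg]
    rintro rfl
    exact hlen rfl

end Word

variable {ι : Type*} [Fintype ι] {X : ι → Type*}

noncomputable def monomialCoeff (m : Π i, FreeMonoid (X i)) (hm : ∀ i, (m i).length < n) :
    Module.Dual F (⨂[F] i, Matrix (Fin n) (Fin n) (FreeAlgebra F (X i × Fin n × Fin n))) :=
  PiTensorProduct.dualDistrib (⨂ₜ[F] i, wordCoeff F (m i) (hm i))

open scoped Classical in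
lemma monomialCoeff_map_psiHom_tprod (m₀ : Π i, FreeMonoid (X i)) (hm₀ : ∀ i, (m₀ i).length < n)
    (m : Π i, FreeMonoid (X i)) :
    monomialCoeff F m₀ hm₀ (PiTensorProduct.map (fun i => (psiHom F (X i) n).toLinearMap)
      (⨂ₜ[F] i, FreeMonoid.lift (FreeAlgebra.ι F) (m i))) = if m = m₀ then 1 else 0 := by
  rw [PiTensorProduct.map_tprod, monomialCoeff, PiTensorProduct.dualDistrib_apply]
  simp only [AlgHom.toLinearMap_apply, wordCoeff_psiHom_lift_ι, Finset.prod_boole,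
    Finset.mem_univ, true_implies, funext_iff]

end PsiHom

open PsiHom in
theorem eq_zero_of_psiHom_tensor_eq_zero_general
    (F : Type*) [Field F] (k : ℕ) (X : Fin k → Type*) (n : ℕ)
    (f : ⨂[F] i, FreeAlgebra F (X i))
    (hdeg : f ∈ Submodule.span F
      {g : ⨂[F] i, FreeAlgebra F (X i) |
        ∃ m : Π i, FreeMonoid (X i), (∑ i, (m i).length) < n ∧
          g = ⨂ₜ[F] i, FreeMonoid.lift (FreeAlgebra.ι F) (m i)})
    (hpsi : PiTensorProduct.map (fun i => (psiHom F (X i) n).toLinearMap) f = 0) :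
    f = 0 := by
  classical
  have hlen : ∀ m : Π i, FreeMonoid (X i), (∑ i, (m i).length) < n → ∀ i, (m i).length < n :=
    fun m hm i =>
      (Finset.single_le_sum (fun j _ => Nat.zero_le (m j).length) (Finset.mem_univ i)).trans_lt hm
  have hdeg' : f ∈ Submodule.span F
      ((fun m : Π i, FreeMonoid (X i) => ⨂ₜ[F] i, FreeMonoid.lift (FreeAlgebra.ι F) (m i)) ''
        {m | (∑ i, (m i).length) < n}) := by
    convert hdeg using 2
    ext g
    constructor <;> rintro ⟨m, hm, rfl⟩ <;> exact ⟨m, hm, rfl⟩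
  refine Submodule.eq_zero_of_mem_span_image_of_biorthogonal hdeg'
    (fun m₀ => monomialCoeff F m₀.1 (hlen m₀.1 m₀.2) ∘ₗ
      PiTensorProduct.map fun i => (psiHom F (X i) n).toLinearMap)
    (fun m₀ m _ => monomialCoeff_map_psiHom_tprod F m₀.1 _ m) (fun m₀ => ?_)
  rw [LinearMap.comp_apply, hpsi, map_zero]

/-- `Ψₙ = Ψₙ^{X₁} ⊗ ⋯ ⊗ Ψₙ^{X_k}` is injective on elements of degree strictly
less than `n`: if `f ∈ F⟨X₁⟩ ⊗_F ⋯ ⊗_F F⟨X_k⟩` lies in the span of the monomials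
`m₁ ⊗ ⋯ ⊗ m_k` of degree `|m₁| + ⋯ + |m_k| < n` and `Ψₙ(f) = 0`, then `f = 0`. -/
theorem eq_zero_of_psiHom_tensor_eq_zero
    (F : Type*) [Field F] (k : ℕ) (X : Fin k → Type*) (n : ℕ) (hn : 1 ≤ n)
    (f : ⨂[F] i, FreeAlgebra F (X i))
    (hdeg : f ∈ Submodule.span F
      {g : ⨂[F] i, FreeAlgebra F (X i) |
        ∃ m : Π i, FreeMonoid (X i), (∑ i, (m i).length) < n ∧
          g = ⨂ₜ[F] i, FreeMonoid.lift (FreeAlgebra.ι F) (m i)})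
    (hpsi : PiTensorProduct.map (fun i => (psiHom F (X i) n).toLinearMap) f = 0) :
    f = 0 :=
  eq_zero_of_psiHom_tensor_eq_zero_general F k X n f hdeg hpsi
end

section
/- Let F be an infinite field, let D₁, …, D_k be finite-dimensional F-algebras, let L be a field extension of F, and let f ∈ F⟨X₁⟩ ⊗_F ⋯ ⊗_F F⟨X_k⟩. If the partially commutative identity f = 0 holds in (D₁, …, D_k), i.e. every valuation v with vᵢ : Xᵢ → Dᵢ satisfies ṽ(f) = 0 in D₁ ⊗_F ⋯ ⊗_F D_k, then f = 0 also holds in (D₁ ⊗_F L, …, D_k ⊗_F L), i.e. every valuation w with wᵢ : Xᵢ → Dᵢ ⊗_F L satisfies w̃(f) = 0 in (D₁ ⊗_F L) ⊗_F ⋯ ⊗_F (D_k ⊗_F L). -/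
open scoped TensorProduct PiTensorProduct

/-!
Let `bᵢ` be a basis of `Dᵢ` and substitute for each `x ∈ Xᵢ` the generic element
`∑ⱼ bᵢⱼ ⊗ Y_{x,j}` of `Dᵢ ⊗ F[Yᵢ]`, where the `Y_{x,j}` are commuting indeterminates. This
turns `f` into an element `T` of `⨂ᵢ (Dᵢ ⊗ F[Yᵢ])`. Specializing the indeterminates to scalars
yields a valuation in `(D₁, …, D_k)`, so every such specialization kills `T`; since `F` is
infinite, a tensor of polynomials that vanishes at every point of `F` is zero, hence `T = 0`.
Finally, every valuation in `(Dᵢ ⊗ L)` is the image of the generic one under the substitution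
of the `L`-coordinates for the indeterminates, so it kills `f` as well.
-/

section

open MvPolynomial PiTensorProduct

theorem Finsupp.eq_zero_of_forall_sum_eval_monomial_smul_eq_zero {F σ V : Type*} [Field F]
    [Infinite F] [AddCommGroup V] [Module F V] (g : (σ →₀ ℕ) →₀ V)
    (h : ∀ p : σ → F, g.sum (fun d v => eval p (monomial d 1) • v) = 0) : g = 0 := by
  classical
  ext d
  rw [Finsupp.coe_zero, Pi.zero_apply, ← Module.forall_dual_apply_eq_zero_iff F]
  intro φ
  have hq : g.sum (fun d v => monomial d (φ v)) = 0 := by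
    apply MvPolynomial.funext
    intro p
    simpa [Finsupp.sum, map_sum, eval_monomial, mul_comm] using congr_arg φ (h p)
  by_cases hd : g d = 0
  · simp [hd]
  · simpa [Finsupp.sum, coeff_sum, coeff_monomial, hd] using congr_arg (coeff d) hq

theorem MvPolynomial.eval_monomial_sigmaFinsuppEquivPiFinsupp_symm {R ι : Type*}
    [CommSemiring R] [Fintype ι] {σ : ι → Type*} (p : (Σ i, σ i) → R) (d : Π i, σ i →₀ ℕ) :
    eval p (monomial (Finsupp.sigmaFinsuppEquivPiFinsupp.symm d) 1)
      = ∏ i, eval (fun s => p ⟨i, s⟩) (monomial (d i) 1) := by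
  simp only [eval_monomial, one_mul]
  rw [Finsupp.prod_of_support_subset _ (s := Finset.univ.sigma fun i => (d i).support) _ _
    (fun _ _ => pow_zero _), Finset.prod_sigma]
  · rfl
  · rintro ⟨i, s⟩ ha
    rw [Finsupp.mem_support_iff, ← Finsupp.sigmaFinsuppEquivPiFinsupp_apply,
      Equiv.apply_symm_apply] at ha
    simpa using ha

theorem Finsupp.eq_zero_of_forall_sum_prod_eval_monomial_smul_eq_zero {F ι V : Type*} [Field F]
    [Infinite F] [Fintype ι] {σ : ι → Type*} [AddCommGroup V] [Module F V]
    (g : (Π i, σ i →₀ ℕ) →₀ V)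
    (h : ∀ p : Π i, σ i → F,
      g.sum (fun d v => (∏ i, eval (p i) (monomial (d i) 1)) • v) = 0) : g = 0 := by
  set E := (Finsupp.sigmaFinsuppEquivPiFinsupp (ιs := σ) (α := ℕ)).symm
  refine (Finsupp.equivCongrLeft E).injective
    ((eq_zero_of_forall_sum_eval_monomial_smul_eq_zero (F := F) _ fun p => ?_).trans
      equivMapDomain_zero.symm)
  rw [Finsupp.equivCongrLeft_apply, Finsupp.sum_equivMapDomain]
  simpa [E, eval_monomial_sigmaFinsuppEquivPiFinsupp_symm] using h fun i s => p ⟨i, s⟩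

namespace PiTensorProduct

variable {R ι : Type*} [CommSemiring R] [Fintype ι] {M : ι → Type*} [∀ i, AddCommMonoid (M i)]
  [∀ i, Module R (M i)]

theorem map_smul_id_apply (c : ι → R) (t : ⨂[R] i, M i) :
    map (fun i => c i • LinearMap.id) t = (∏ i, c i) • t := by
  induction t using PiTensorProduct.induction_on with
  | smul_tprod r m =>
    simp only [map_smul, map_tprod, LinearMap.smul_apply, LinearMap.id_apply,
      MultilinearMap.map_smul_univ, smul_comm r]
  | add x y hx hy => rw [map_add, hx, hy, smul_add]

theorem ofFinsuppEquiv_symm_single [DecidableEq ι] {κ : ι → Type*} [∀ i, DecidableEq (κ i)]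
    [∀ i, DecidableEq (M i)] (d : Π i, κ i) (t : ⨂[R] i, M i) :
    ofFinsuppEquiv.symm (Finsupp.single d t) = map (fun i => Finsupp.lsingle (d i)) t := by
  induction t using PiTensorProduct.induction_on with
  | smul_tprod r m =>
    rw [← Finsupp.smul_single, map_smul, map_smul, ofFinsuppEquiv_symm_single_tprod, map_tprod]
    rfl
  | add x y hx hy => rw [Finsupp.single_add, map_add, map_add, hx, hy]

end PiTensorProduct

namespace MvPolynomial

variable {R σ : Type*} [CommSemiring R]

noncomputable def tensorEval {M : Type*} [AddCommMonoid M] [Module R M] (p : σ → R) :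
    M ⊗[R] MvPolynomial σ R →ₗ[R] M :=
  TensorProduct.rid R M ∘ₗ (aeval p).toLinearMap.lTensor M

@[simp]
theorem tensorEval_tmul {M : Type*} [AddCommMonoid M] [Module R M] (p : σ → R) (m : M)
    (q : MvPolynomial σ R) : tensorEval p (m ⊗ₜ q) = eval p q • m := by
  simp [tensorEval]

noncomputable def tensorEvalAlgHom {A : Type*} [Semiring A] [Algebra R A] (p : σ → R) :
    A ⊗[R] MvPolynomial σ R →ₐ[R] A :=
  (Algebra.TensorProduct.rid R R A).toAlgHom.comp
    (Algebra.TensorProduct.map (AlgHom.id R A) (aeval p))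

theorem tensorEvalAlgHom_toLinearMap {A : Type*} [Semiring A] [Algebra R A] (p : σ → R) :
    (tensorEvalAlgHom (A := A) p).toLinearMap = tensorEval p := rfl

end MvPolynomial

theorem PiTensorProduct.eq_zero_of_forall_map_tensorEval_eq_zero {F ι : Type*} [Field F]
    [Infinite F] [Fintype ι] {M σ : ι → Type*} [∀ i, AddCommGroup (M i)] [∀ i, Module F (M i)]
    (T : ⨂[F] i, M i ⊗[F] MvPolynomial (σ i) F)
    (h : ∀ p : Π i, σ i → F, map (fun i => tensorEval (p i)) T = 0) : T = 0 := by
  classical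
  let e i := TensorProduct.equivFinsuppOfBasisRight (M := M i) (basisMonomials (σ i) F)
  -- `Φ T` lists the coefficients `t_d ∈ ⨂ᵢ Mᵢ` of `T` at the monomials `Y^d`.
  let Φ := congr e ≪≫ₗ ofFinsuppEquiv
  have hΦ : ∀ (p : Π i, σ i → F) G, map (fun i => tensorEval (p i)) (Φ.symm G)
      = G.sum (fun d v => (∏ i, eval (p i) (monomial (d i) 1)) • v) := by
    intro p G
    induction G using Finsupp.induction_linear with
    | zero => simp
    | add G G' hG hG' =>
      rw [map_add, map_add, hG, hG', Finsupp.sum_add_index' (fun _ => smul_zero _)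
        (fun _ _ _ => smul_add _ _ _)]
    | single d t =>
      have hcomp : ∀ i, tensorEval (p i) ∘ₗ (e i).symm.toLinearMap ∘ₗ Finsupp.lsingle (d i)
          = eval (p i) (monomial (d i) 1) • LinearMap.id := by
        intro i
        ext m
        simp [e, TensorProduct.equivFinsuppOfBasisRight_symm_apply]
      have hsymm : Φ.symm (Finsupp.single d t)
          = map (fun i => (e i).symm.toLinearMap ∘ₗ Finsupp.lsingle (d i)) t := by
        rw [map_comp]
        exact congrArg (congr e).symm (ofFinsuppEquiv_symm_single d t)
      rw [hsymm, ← LinearMap.comp_apply, ← map_comp, funext hcomp, map_smul_id_apply,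
        Finsupp.sum_single_index (by rw [smul_zero])]
  rw [← Φ.symm_apply_apply T,
    Finsupp.eq_zero_of_forall_sum_prod_eval_monomial_smul_eq_zero (F := F) (Φ T)
      fun p => by rw [← hΦ, Φ.symm_apply_apply, h], map_zero]

theorem FreeAlgebra.algHom_comp_lift {R X A B : Type*} [CommSemiring R] [Semiring A]
    [Algebra R A] [Semiring B] [Algebra R B] (φ : A →ₐ[R] B) (v : X → A) :
    φ.comp (FreeAlgebra.lift R v) = FreeAlgebra.lift R (φ ∘ v) := by
  ext x
  simp

theorem PiTensorProduct.map_freeAlgebraLift_comp {R ι : Type*} [CommSemiring R]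
    {X A B : ι → Type*} [∀ i, Semiring (A i)] [∀ i, Algebra R (A i)] [∀ i, Semiring (B i)]
    [∀ i, Algebra R (B i)] (φ : Π i, A i →ₐ[R] B i) (v : Π i, X i → A i)
    (f : ⨂[R] i, FreeAlgebra R (X i)) :
    map (fun i => (FreeAlgebra.lift R (φ i ∘ v i)).toLinearMap) f
      = map (fun i => (φ i).toLinearMap)
          (map (fun i => (FreeAlgebra.lift R (v i)).toLinearMap) f) := by
  simp only [← FreeAlgebra.algHom_comp_lift, AlgHom.comp_toLinearMap, map_comp,
    LinearMap.comp_apply]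

namespace Module.Basis

variable {F D X ι : Type*} [CommSemiring F] [Semiring D] [Algebra F D] [Fintype ι]

noncomputable def genericValuation (b : Basis ι F D) (x : X) : D ⊗[F] MvPolynomial (X × ι) F :=
  ∑ j, b j ⊗ₜ MvPolynomial.X (x, j)

theorem exists_map_aeval_comp_genericValuation {L : Type*} [CommSemiring L] [Algebra F L]
    (b : Basis ι F D) (w : X → D ⊗[F] L) :
    ∃ c : X × ι → L,
      Algebra.TensorProduct.map (AlgHom.id F D) (aeval c) ∘ b.genericValuation = w := by
  choose a ha using fun x => TensorProduct.eq_repr_basis_left b (w x)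
  refine ⟨fun xj => a xj.1 xj.2, funext fun x => ?_⟩
  simp [genericValuation, ← ha x, Finsupp.sum_fintype]

end Module.Basis

end

/-- Let `F` be an infinite field, `D₁, …, D_k` finite-dimensional `F`-algebras and
`L` a field extension of `F`.  If the partially commutative identity `f = 0`
(for `f ∈ F⟨X₁⟩ ⊗_F ⋯ ⊗_F F⟨X_k⟩`) holds in `(D₁, …, D_k)`, i.e. every valuation
`v` with `vᵢ : Xᵢ → Dᵢ` satisfies `ṽ(f) = 0` in `D₁ ⊗_F ⋯ ⊗_F D_k`, then it also
holds in `(D₁ ⊗_F L, …, D_k ⊗_F L)`: every valuation `w` with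
`wᵢ : Xᵢ → Dᵢ ⊗_F L` satisfies `w̃(f) = 0` in
`(D₁ ⊗_F L) ⊗_F ⋯ ⊗_F (D_k ⊗_F L)`. -/
theorem identity_extends_to_baseChange
    (F : Type*) [Field F] [Infinite F] (k : ℕ) (X : Fin k → Type*)
    (D : Fin k → Type*) [∀ i, Ring (D i)] [∀ i, Algebra F (D i)]
    [∀ i, FiniteDimensional F (D i)]
    (L : Type*) [Field L] [Algebra F L]
    (f : ⨂[F] i, FreeAlgebra F (X i))
    (hD : ∀ v : Π i, X i → D i,
      PiTensorProduct.map (fun i => (FreeAlgebra.lift F (v i)).toLinearMap) f = 0)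
    (w : Π i, X i → (D i ⊗[F] L)) :
    PiTensorProduct.map (fun i => (FreeAlgebra.lift F (w i)).toLinearMap) f = 0 := by
  let b i := Module.finBasis F (D i)
  have hgeneric : PiTensorProduct.map
      (fun i => (FreeAlgebra.lift F (b i).genericValuation).toLinearMap) f = 0 := by
    refine PiTensorProduct.eq_zero_of_forall_map_tensorEval_eq_zero _ fun p => ?_
    simp only [← MvPolynomial.tensorEvalAlgHom_toLinearMap,
      ← PiTensorProduct.map_freeAlgebraLift_comp]
    exact hD _
  choose c hc using fun i => (b i).exists_map_aeval_comp_genericValuation (w i)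
  simp only [← hc, PiTensorProduct.map_freeAlgebraLift_comp, hgeneric, map_zero]
end

section
/- Let F be an infinite field, X₁, …, X_k pairwise disjoint nonempty sets of variables, and n ≥ 1. Then the tensor product of generic matrix algebras Fₙ⟨X₁⟩ ⊗_F ⋯ ⊗_F Fₙ⟨X_k⟩ is a domain: it is a nontrivial ring in which the product of any two nonzero elements is nonzero. -/
open scoped TensorProduct PiTensorProduct

set_option synthInstance.maxHeartbeats 1000000
set_option maxHeartbeats 1000000

/-!
Let `yᵢ` be the cyclic shift matrix of size `n` acting in the `i`-th tensor factor of
`Mₙ^{⊗ι} = M_{ι → Fin n}`, with its wrap-around entry multiplied by a fresh central variable `zᵢ`,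
so that `yᵢⁿ = zᵢ`. Substituting `t^{(x)}_{ab} ↦ u^{(x)}_{b-a, a} zᵢ^{[b < a]}` in the `i`-th factor
turns the generic matrix `x ∈ Xᵢ` into `∑_c D_c yᵢ^c` with diagonal `D_c = diag(u^{(x)}_{c,a})_a`,
and the Kronecker product of these substitutions is injective on `⨂ᵢ Mₙ(F[t])`, because it maps
distinct tensors of matrix units times monomials to distinct matrix units times monomials.
Conjugating a diagonal matrix of polynomials in the `u` by `yᵢ` shifts the index `a` of its
variables, so the image lies in a faithful matrix representation of the twisted polynomial ring
`L[y; σ]` over `L = F[u]`, graded by `ι → ℕ`. That ring has no zero divisors: `ι → ℕ` has unique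
sums and every `σ` is injective, so leading coefficients multiply to a nonzero coefficient.
-/

section TwistedConv

open Finsupp

variable {G R : Type*} [AddMonoid G] [Semiring R] (σ : G → R →+* R)

noncomputable def twistedConv (f g : G →₀ R) : G →₀ R :=
  f.sum fun a r => g.sum fun b s => single (a + b) (r * σ a s)

variable {σ}

theorem twistedConv_apply_of_uniqueAdd {f g : G →₀ R} {a₀ b₀ : G} (ha₀ : a₀ ∈ f.support)
    (hb₀ : b₀ ∈ g.support) (h : UniqueAdd f.support g.support a₀ b₀) :
    twistedConv σ f g (a₀ + b₀) = f a₀ * σ a₀ (g b₀) := by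
  simp only [twistedConv, Finsupp.sum_apply]
  rw [Finsupp.sum, Finset.sum_eq_single_of_mem a₀ ha₀, Finsupp.sum,
    Finset.sum_eq_single_of_mem b₀ hb₀, single_eq_same]
  · exact fun b hb hne => single_eq_of_ne fun hab => hne (h ha₀ hb hab.symm).2
  · refine fun a ha hne => Finset.sum_eq_zero fun b hb => ?_
    exact single_eq_of_ne fun hab => hne (h ha hb hab.symm).1

theorem twistedConv_ne_zero [UniqueSums G] [NoZeroDivisors R]
    (hσ : ∀ a, Function.Injective (σ a)) {f g : G →₀ R} (hf : f ≠ 0) (hg : g ≠ 0) :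
    twistedConv σ f g ≠ 0 := by
  obtain ⟨a₀, ha₀, b₀, hb₀, h⟩ := UniqueSums.uniqueAdd_of_nonempty
    (support_nonempty_iff.mpr hf) (support_nonempty_iff.mpr hg)
  refine ne_iff.mpr ⟨a₀ + b₀, ?_⟩
  rw [twistedConv_apply_of_uniqueAdd ha₀ hb₀ h, Finsupp.zero_apply]
  exact mul_ne_zero (mem_support_iff.mp ha₀)
    ((map_ne_zero_iff _ (hσ a₀)).mpr (mem_support_iff.mp hb₀))

end TwistedConv

theorem PiTensorProduct.map_injective_s9 {K ι : Type*} [Field K] {M N : ι → Type*}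
    [∀ i, AddCommGroup (M i)] [∀ i, Module K (M i)] [∀ i, AddCommGroup (N i)]
    [∀ i, Module K (N i)] {f : ∀ i, M i →ₗ[K] N i} (hf : ∀ i, Function.Injective (f i)) :
    Function.Injective (PiTensorProduct.map f) := by
  choose g hg using fun i =>
    LinearMap.exists_leftInverse_of_injective (f i) (LinearMap.ker_eq_bot.mpr (hf i))
  refine Function.LeftInverse.injective (g := PiTensorProduct.map g) fun t => ?_
  rw [← LinearMap.comp_apply, ← PiTensorProduct.map_comp, funext hg, PiTensorProduct.map_id,
    LinearMap.id_apply]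

theorem PiTensorProduct.range_le_of_forall_singleAlgHom_mem {R ι : Type*} [CommSemiring R]
    [Fintype ι] [DecidableEq ι] {A : ι → Type*} [∀ i, Semiring (A i)] [∀ i, Algebra R (A i)]
    {B : Type*} [Semiring B] [Algebra R B] {φ : (⨂[R] i, A i) →ₐ[R] B} {S : Subalgebra R B}
    (h : ∀ i a, φ (singleAlgHom i a) ∈ S) : φ.range ≤ S := by
  rintro _ ⟨t, rfl⟩
  change φ t ∈ S
  induction t using PiTensorProduct.induction_on with
  | smul_tprod r a =>
    have hprod := Finset.map_noncommProd Finset.univ (fun i => Pi.mulSingle i (a i))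
      (fun i _ j _ _ => Pi.mulSingle_apply_commute a i j) (φ.toMonoidHom.comp (tprodMonoidHom R))
    rw [Finset.noncommProd_mulSingle] at hprod
    rw [map_smul]
    refine S.smul_mem ?_ r
    change (φ.toMonoidHom.comp (tprodMonoidHom R)) a ∈ S
    rw [hprod]
    exact Submonoid.noncommProd_mem S.toSubmonoid _ _ _ fun i _ => h i (a i)
  | add x y hx hy => rw [map_add]; exact add_mem hx hy

namespace TensorGenericMatrix

open MvPolynomial Module Fin.NatCast

variable (F : Type*) [Field F] {ι : Type*} (n : ℕ) (V : ι → Type*)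

/-- `⟨i, x, c, a⟩` indexes the variable `u^{(x)}_{c,a}`: the `a`-th diagonal entry of the
coefficient of `yᵢ^c` in the generic matrix `x ∈ V i`. -/
abbrev DiagIdx := Σ i, V i × Fin n × Fin n

abbrev CoeffRing := MvPolynomial (DiagIdx n V) F

abbrev AmbientRing := MvPolynomial (ι ⊕ DiagIdx n V) F

abbrev AmbientMatrix := Matrix (ι → Fin n) (ι → Fin n) (AmbientRing F n V)

noncomputable def z (i : ι) : AmbientRing F n V := X (.inl i)

noncomputable def embedCoeff : CoeffRing F n V →ₐ[F] AmbientRing F n V := rename .inr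

def shiftIdx (c : ι → Fin n) (v : DiagIdx n V) : DiagIdx n V :=
  ⟨v.1, v.2.1, v.2.2.1, v.2.2.2 + c v.1⟩

noncomputable def shift (c : ι → Fin n) : CoeffRing F n V →ₐ[F] CoeffRing F n V :=
  rename (shiftIdx n V c)

/-- The substitution `t^{(x)}_{ab} ↦ u^{(x)}_{b-a, a} zᵢ^{[b < a]}` in the `i`-th factor; the
exponent `(a + (b - a)) / n` is `1` exactly when `b - a` wraps around modulo `n`. -/
noncomputable def slotEmbed (i : ι) :
    MvPolynomial (V i × Fin n × Fin n) F →ₐ[F] AmbientRing F n V :=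
  aeval fun v => X (.inr ⟨i, v.1, v.2.2 - v.2.1, v.2.1⟩) *
    z F n V i ^ (((v.2.1 : ℕ) + (v.2.2 - v.2.1 : Fin n)) / n)

variable {F n V}

theorem sumAlgEquiv_embedCoeff (ℓ : CoeffRing F n V) :
    sumAlgEquiv F ι (DiagIdx n V) (embedCoeff F n V ℓ) = C ℓ :=
  congrArg (· ℓ) (sumAlgEquiv_comp_rename_inr F ι (DiagIdx n V))

section Shift

variable [NeZero n]

theorem shiftIdx_comp_shiftIdx (c d : ι → Fin n) :
    shiftIdx n V c ∘ shiftIdx n V d = shiftIdx n V (c + d) := by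
  ext v <;> simp [shiftIdx, add_assoc, add_comm (d _)]

theorem shift_shift (c d : ι → Fin n) (ℓ : CoeffRing F n V) :
    shift F n V c (shift F n V d ℓ) = shift F n V (c + d) ℓ := by
  rw [shift, shift, rename_rename, shiftIdx_comp_shiftIdx, shift]

theorem shift_injective (c : ι → Fin n) : Function.Injective (shift F n V c) := by
  refine rename_injective _ (Function.LeftInverse.injective (g := shiftIdx n V (-c)) fun v => ?_)
  simp [shiftIdx]

theorem shift_zero (ℓ : CoeffRing F n V) : shift F n V 0 ℓ = ℓ := by
  have : shiftIdx n V (0 : ι → Fin n) = id := funext fun v => by simp [shiftIdx]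
  rw [shift, this, rename_id_apply]

theorem eq_of_natCast_comp_eq_of_div_eq {g h : ι → ℕ}
    (hmod : (Nat.cast ∘ h : ι → Fin n) = Nat.cast ∘ g)
    (hdiv : (fun i => h i / n) = fun i => g i / n) : h = g := by
  funext i
  have hmod_i : h i % n = g i % n := by simpa [Fin.ext_iff] using congrFun hmod i
  rw [← Nat.div_add_mod (h i) n, ← Nat.div_add_mod (g i) n, hmod_i, congrFun hdiv i]

end Shift

section TwistedRep

variable [Fintype ι]

variable (F n V) in
noncomputable def zPow (p : ι → Fin n) (g : ι → ℕ) : AmbientRing F n V :=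
  ∏ i, z F n V i ^ (((p i : ℕ) + g i) / n)

theorem zPow_zero (p : ι → Fin n) : zPow F n V p 0 = 1 :=
  Finset.prod_eq_one fun i _ => by rw [Pi.zero_apply, add_zero, Nat.div_eq_of_lt (p i).2, pow_zero]

variable [NeZero n]

theorem zPow_mul_zPow (p : ι → Fin n) (g h : ι → ℕ) :
    zPow F n V p g * zPow F n V (p + Nat.cast ∘ g) h = zPow F n V p (g + h) := by
  simp only [zPow, ← Finset.prod_mul_distrib, ← pow_add]
  refine Finset.prod_congr rfl fun i _ => congrArg _ ?_
  simp only [Pi.add_apply, Function.comp_apply, Fin.val_add, Fin.val_natCast, Nat.add_mod_mod]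
  conv_rhs => rw [← add_assoc, ← Nat.div_add_mod (p i + g i : ℕ) n, add_assoc,
    Nat.mul_add_div (NeZero.pos n)]

theorem sumAlgEquiv_zPow_zero (h : ι → ℕ) :
    sumAlgEquiv F ι (DiagIdx n V) (zPow F n V 0 h) = ∏ i, X i ^ (h i / n) := by
  simp [zPow, z, sumAlgEquiv_X_inl]

variable (F n V) in
/-- The matrix of `ℓ y^g`, where `y^g = ∏ᵢ yᵢ^{gᵢ}`. -/
noncomputable def twistedMonomial (g : ι → ℕ) :
    CoeffRing F n V →ₗ[F] AmbientMatrix F n V where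
  toFun ℓ := Matrix.of fun p q =>
    if q = p + Nat.cast ∘ g then embedCoeff F n V (shift F n V p ℓ) * zPow F n V p g else 0
  map_add' a b := Matrix.ext fun p q => by
    simp only [Matrix.of_apply, map_add, Matrix.add_apply]; split_ifs <;> simp [add_mul]
  map_smul' c a := Matrix.ext fun p q => by
    simp only [Matrix.of_apply, map_smul, Matrix.smul_apply]; split_ifs <;> simp

theorem twistedMonomial_apply (g : ι → ℕ) (ℓ : CoeffRing F n V) (p q : ι → Fin n) :
    twistedMonomial F n V g ℓ p q =
      if q = p + Nat.cast ∘ g then embedCoeff F n V (shift F n V p ℓ) * zPow F n V p g else 0 :=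
  rfl

theorem sumAlgEquiv_twistedMonomial_zero_apply (h : ι → ℕ) (ℓ : CoeffRing F n V)
    (q : ι → Fin n) :
    sumAlgEquiv F ι (DiagIdx n V) (twistedMonomial F n V h ℓ 0 q) =
      if q = Nat.cast ∘ h then monomial (Finsupp.equivFunOnFinite.symm fun i => h i / n) ℓ
      else 0 := by
  rw [twistedMonomial_apply, zero_add, apply_ite (sumAlgEquiv F ι (DiagIdx n V)), map_zero,
    map_mul, shift_zero, sumAlgEquiv_embedCoeff, sumAlgEquiv_zPow_zero, monomial_eq,
    Finsupp.prod_fintype _ _ fun _ => pow_zero _]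
  rfl

theorem twistedMonomial_zero_one : twistedMonomial F n V 0 1 = 1 := by
  refine Matrix.ext fun p q => ?_
  rw [twistedMonomial_apply, map_one, map_one, zPow_zero, mul_one, Matrix.one_apply]
  simp [eq_comm]

variable (F n V) in
noncomputable def twistedRep : ((ι → ℕ) →₀ CoeffRing F n V) →ₗ[F] AmbientMatrix F n V :=
  Finsupp.lsum F (twistedMonomial F n V)

variable [DecidableEq ι]

theorem twistedMonomial_mul (g h : ι → ℕ) (ℓ m : CoeffRing F n V) :
    twistedMonomial F n V g ℓ * twistedMonomial F n V h m =
      twistedMonomial F n V (g + h) (ℓ * shift F n V (Nat.cast ∘ g) m) := by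
  have hcast : (Nat.cast ∘ (g + h) : ι → Fin n) = Nat.cast ∘ g + Nat.cast ∘ h :=
    funext fun i => Nat.cast_add _ _
  refine Matrix.ext fun p q => ?_
  rw [Matrix.mul_apply, Finset.sum_eq_single (p + Nat.cast ∘ g)]
  · rw [twistedMonomial_apply, twistedMonomial_apply, twistedMonomial_apply, if_pos rfl, hcast,
      ← add_assoc]
    split_ifs
    · rw [map_mul, map_mul, shift_shift, ← zPow_mul_zPow]
      ring
    · rw [mul_zero]
  · intro r _ hr
    rw [twistedMonomial_apply, if_neg hr, zero_mul]
  · exact fun h => absurd (Finset.mem_univ _) h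

theorem twistedRep_mul (f g : (ι → ℕ) →₀ CoeffRing F n V) :
    twistedRep F n V f * twistedRep F n V g =
      twistedRep F n V (twistedConv (fun c => (shift F n V (Nat.cast ∘ c)).toRingHom) f g) := by
  simp only [twistedRep, twistedConv, Finsupp.lsum_apply, map_finsuppSum, Finsupp.sum_mul]
  simp only [Finsupp.mul_sum, twistedMonomial_mul, map_zero, Finsupp.sum_single_index]
  rfl

/-- The column index records `g mod n` and the exponent of `z` records `g / n`, so together they
single out the coefficient of `y^g`. -/
theorem coeff_sumAlgEquiv_twistedRep_zero_apply (f : (ι → ℕ) →₀ CoeffRing F n V) (g : ι → ℕ) :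
    coeff (Finsupp.equivFunOnFinite.symm fun i => g i / n)
      (sumAlgEquiv F ι (DiagIdx n V) (twistedRep F n V f 0 (Nat.cast ∘ g))) = f g := by
  rw [twistedRep, Finsupp.lsum_apply, Finsupp.sum, Matrix.sum_apply, map_sum, coeff_sum,
    Finset.sum_eq_single g]
  · simp [sumAlgEquiv_twistedMonomial_zero_apply, coeff_monomial]
  · intro h _ hne
    rw [sumAlgEquiv_twistedMonomial_zero_apply]
    split_ifs with hq
    · rw [coeff_monomial, if_neg fun hd => hne (eq_of_natCast_comp_eq_of_div_eq hq.symm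
        (Finsupp.equivFunOnFinite.symm.injective hd))]
    · rw [coeff_zero]
  · intro hg
    rw [Finsupp.notMem_support_iff.mp hg, map_zero, Matrix.zero_apply, map_zero, coeff_zero]

theorem twistedRep_injective : Function.Injective (twistedRep F n V) := by
  refine (injective_iff_map_eq_zero _).mpr fun f hf => Finsupp.ext fun g => ?_
  rw [← coeff_sumAlgEquiv_twistedRep_zero_apply f g, hf]
  simp

variable (F n V) in
noncomputable def twistedRange : Subalgebra F (AmbientMatrix F n V) :=
  (LinearMap.range (twistedRep F n V)).toSubalgebra
    ⟨Finsupp.single 0 1, by rw [twistedRep, Finsupp.lsum_single, twistedMonomial_zero_one]⟩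
    (by
      rintro _ _ ⟨f, rfl⟩ ⟨g, rfl⟩
      exact ⟨_, (twistedRep_mul f g).symm⟩)

theorem twistedRep_mul_ne_zero {f g : (ι → ℕ) →₀ CoeffRing F n V} (hf : f ≠ 0) (hg : g ≠ 0) :
    twistedRep F n V f * twistedRep F n V g ≠ 0 := by
  rw [twistedRep_mul]
  exact (map_ne_zero_iff _ twistedRep_injective).mpr
    (twistedConv_ne_zero (fun _ => shift_injective _) hf hg)

instance : NoZeroDivisors (twistedRange F n V) := by
  refine ⟨fun {a b} hab => ?_⟩
  obtain ⟨f, hf⟩ := a.2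
  obtain ⟨g, hg⟩ := b.2
  by_contra! hne
  refine twistedRep_mul_ne_zero (f := f) (g := g) ?_ ?_
    (by rw [hf, hg]; exact congrArg Subtype.val hab)
  · rintro rfl
    exact hne.1 (Subtype.ext (hf.symm.trans (map_zero _)))
  · rintro rfl
    exact hne.2 (Subtype.ext (hg.symm.trans (map_zero _)))

end TwistedRep

section Slot

variable [DecidableEq ι]

variable (F n V) in
noncomputable def slotRecover (i : ι) :
    AmbientRing F n V →ₐ[F] MvPolynomial (V i × Fin n × Fin n) F :=
  aeval <| Sum.elim (fun _ => 1) fun u =>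
    if h : u.1 = i then X (h ▸ u.2.1, u.2.2.2, u.2.2.2 + u.2.2.1) else 1

theorem slotRecover_comp_slotEmbed_of_ne {i j : ι} (hij : j ≠ i) :
    (slotRecover F n V i).comp (slotEmbed F n V j) = aeval fun _ => 1 := by
  refine algHom_ext fun ⟨x, a, b⟩ => ?_
  simp [slotRecover, slotEmbed, z, hij]

variable [NeZero n]

theorem slotRecover_comp_slotEmbed (i : ι) :
    (slotRecover F n V i).comp (slotEmbed F n V i) = AlgHom.id F _ := by
  refine algHom_ext fun ⟨x, a, b⟩ => ?_
  simp [slotRecover, slotEmbed, z]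

variable (F n V) in
/-- The generic matrix `x ∈ V i` as `∑_c D_c yᵢ^c`. -/
noncomputable def genericElement (i : ι) (x : V i) : (ι → ℕ) →₀ CoeffRing F n V :=
  ∑ c : Fin n, Finsupp.single (Pi.single i (c : ℕ)) (X ⟨i, x, c, 0⟩)

end Slot

section Kronecker

variable [Fintype ι]

variable (F n V) in
noncomputable def kronecker :
    MultilinearMap F (fun i => Matrix (Fin n) (Fin n) (MvPolynomial (V i × Fin n × Fin n) F))
      (AmbientMatrix F n V) :=
  (Matrix.ofLinearEquiv F).toLinearMap.compMultilinearMap <|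
    MultilinearMap.pi fun p => MultilinearMap.pi fun q =>
      (MultilinearMap.mkPiAlgebra F ι (AmbientRing F n V)).compLinearMap fun i =>
        (slotEmbed F n V i).toLinearMap ∘ₗ Matrix.entryLinearMap F _ (p i) (q i)

theorem kronecker_apply (A : ∀ i, Matrix (Fin n) (Fin n) (MvPolynomial (V i × Fin n × Fin n) F))
    (p q : ι → Fin n) : kronecker F n V A p q = ∏ i, slotEmbed F n V i (A i (p i) (q i)) :=
  rfl

theorem kronecker_one : kronecker F n V 1 = 1 := by
  refine Matrix.ext fun p q => ?_
  simp only [kronecker_apply, Pi.one_apply, Matrix.one_apply, apply_ite (slotEmbed F n V _),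
    map_one, map_zero]
  rw [Finset.prod_ite_zero, Finset.prod_const_one]
  simp [funext_iff]

theorem kronecker_single (a b : ι → Fin n) (c : ∀ i, MvPolynomial (V i × Fin n × Fin n) F) :
    kronecker F n V (fun i => Matrix.single (a i) (b i) (c i)) =
      Matrix.single a b (∏ i, slotEmbed F n V i (c i)) := by
  refine Matrix.ext fun p q => ?_
  simp only [kronecker_apply, Matrix.single_apply, apply_ite (slotEmbed F n V _), map_zero]
  rw [Finset.prod_ite_zero]
  simp [funext_iff, forall_and]

theorem exists_monomial_eq_prod_slotEmbed (s : ∀ i, V i × Fin n × Fin n →₀ ℕ) :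
    ∃ m, ∏ i, slotEmbed F n V i (monomial (s i) 1) = monomial m 1 := by
  have hX (v : ι ⊕ DiagIdx n V) :
      (X v : AmbientRing F n V) ∈ MonoidHom.mrange (monomialOneHom F _) :=
    ⟨.ofAdd (Finsupp.single v 1), rfl⟩
  have hslot (i : ι) :
      slotEmbed F n V i (monomial (s i) 1) ∈ MonoidHom.mrange (monomialOneHom F _) := by
    rw [slotEmbed, aeval_monomial, map_one, one_mul]
    exact Submonoid.prod_mem _ fun v _ => pow_mem (mul_mem (hX _) (pow_mem (hX _) _)) _
  obtain ⟨m, hm⟩ := Submonoid.prod_mem _ fun i _ => hslot i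
  exact ⟨m, hm.symm⟩

variable [DecidableEq ι]

theorem kronecker_mul (A B : ∀ i, Matrix (Fin n) (Fin n) (MvPolynomial (V i × Fin n × Fin n) F)) :
    kronecker F n V (A * B) = kronecker F n V A * kronecker F n V B := by
  refine Matrix.ext fun p q => ?_
  simp only [kronecker_apply, Pi.mul_apply, Matrix.mul_apply, map_sum, map_mul]
  rw [Finset.prod_univ_sum, Fintype.piFinset_univ]
  simp only [Finset.prod_mul_distrib]

theorem kronecker_mulSingle_apply (i : ι)
    (A : Matrix (Fin n) (Fin n) (MvPolynomial (V i × Fin n × Fin n) F)) (p q : ι → Fin n) :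
    kronecker F n V (Pi.mulSingle i A) p q =
      if ∀ j, j ≠ i → p j = q j then slotEmbed F n V i (A (p i) (q i)) else 0 := by
  rw [kronecker_apply, Fintype.prod_eq_mul_prod_compl i, Pi.mulSingle_eq_same]
  have hrest (j : ι) (hj : j ∈ ({i}ᶜ : Finset ι)) :
      slotEmbed F n V j ((Pi.mulSingle i A :
        ∀ j, Matrix (Fin n) (Fin n) (MvPolynomial (V j × Fin n × Fin n) F)) j (p j) (q j)) =
        if p j = q j then 1 else 0 := by
    rw [Pi.mulSingle_eq_of_ne (by simpa using hj), Matrix.one_apply, apply_ite (slotEmbed F n V j),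
      map_one, map_zero]
  rw [Finset.prod_congr rfl hrest, Finset.prod_ite_zero, Finset.prod_const_one]
  simp

variable (F n V) in
noncomputable def tensorEmbed :
    (⨂[F] i, (genericMatrixHom F (V i) n).range) →ₐ[F] AmbientMatrix F n V :=
  PiTensorProduct.liftAlgHom
    ((kronecker F n V).compLinearMap fun i => (genericMatrixHom F (V i) n).range.val.toLinearMap)
    kronecker_one fun _ _ => kronecker_mul _ _

theorem tensorEmbed_tprod (a : ∀ i, (genericMatrixHom F (V i) n).range) :
    tensorEmbed F n V (PiTensorProduct.tprod F a) = kronecker F n V fun i => (a i).1 :=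
  PiTensorProduct.lift.tprod a

theorem tensorEmbed_singleAlgHom (i : ι) (a : (genericMatrixHom F (V i) n).range) :
    tensorEmbed F n V (PiTensorProduct.singleAlgHom i a) =
      kronecker F n V (Pi.mulSingle i a.1) := by
  rw [PiTensorProduct.singleAlgHom_apply, tensorEmbed_tprod]
  exact congrArg _ <| funext <|
    Pi.apply_mulSingle (fun j => (genericMatrixHom F (V j) n).range.val) (fun _ => rfl) i a

variable [NeZero n]

theorem slotRecover_prod_slotEmbed (s : ∀ i, V i × Fin n × Fin n →₀ ℕ) (j : ι) :
    slotRecover F n V j (∏ i, slotEmbed F n V i (monomial (s i) 1)) = monomial (s j) 1 := by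
  rw [map_prod, Finset.prod_eq_single_of_mem j (Finset.mem_univ j)]
  · rw [← AlgHom.comp_apply, slotRecover_comp_slotEmbed, AlgHom.id_apply]
  · intro i _ hij
    rw [← AlgHom.comp_apply, slotRecover_comp_slotEmbed_of_ne hij, aeval_monomial]
    simp [Finsupp.prod]

theorem lift_kronecker_injective :
    Function.Injective (PiTensorProduct.lift (kronecker F n V)) := by
  let b := Basis.piTensorProduct fun i =>
    (basisMonomials (V i × Fin n × Fin n) F).matrix (Fin n) (Fin n)
  choose m hm using exists_monomial_eq_prod_slotEmbed (F := F) (n := n) (V := V)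
  let idx (v : ∀ i, Fin n × Fin n × (V i × Fin n × Fin n →₀ ℕ)) :
      (ι → Fin n) × (ι → Fin n) × (ι ⊕ DiagIdx n V →₀ ℕ) :=
    (fun i => (v i).1, fun i => (v i).2.1, m fun i => (v i).2.2)
  have hidx : Function.Injective idx := by
    intro v w hvw
    simp only [idx, Prod.mk.injEq] at hvw
    obtain ⟨hrow, hcol, hexp⟩ := hvw
    have hs (j : ι) : (v j).2.2 = (w j).2.2 := monomial_left_injective (one_ne_zero (α := F)) <| by
      dsimp only
      rw [← slotRecover_prod_slotEmbed (fun i => (v i).2.2) j, hm, hexp, ← hm,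
        slotRecover_prod_slotEmbed]
    exact funext fun j => Prod.ext (congrFun hrow j) (Prod.ext (congrFun hcol j) (hs j))
  have himage : PiTensorProduct.lift (kronecker F n V) ∘ b =
      (basisMonomials (ι ⊕ DiagIdx n V) F).matrix _ _ ∘ idx := funext fun v => by
    have hbasis (i : ι) : (basisMonomials _ F).matrix (Fin n) (Fin n) (v i) =
        Matrix.single (v i).1 (v i).2.1 (monomial (v i).2.2 1) :=
      (Basis.matrix_apply _ _ _ _).trans (by rw [coe_basisMonomials])
    simp only [Function.comp_apply, b, Basis.piTensorProduct_apply, PiTensorProduct.lift.tprod,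
      hbasis, kronecker_single, hm]
    rw [Basis.matrix_apply, coe_basisMonomials]
  exact LinearMap.injective_of_linearIndependent b.span_eq
    (himage ▸ ((basisMonomials _ F).matrix _ _).linearIndependent.comp idx hidx)

theorem twistedRep_genericElement_apply (i : ι) (x : V i) (p q : ι → Fin n) :
    twistedRep F n V (genericElement F n V i x) p q =
      if ∀ j, j ≠ i → p j = q j then slotEmbed F n V i (X (x, p i, q i)) else 0 := by
  have hcast (c : Fin n) : (Nat.cast ∘ Pi.single i (c : ℕ) : ι → Fin n) = Pi.single i c := by
    funext j
    by_cases hj : j = i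
    · subst hj; simp
    · simp [hj]
  have hcond (c : Fin n) :
      q = p + Pi.single i c ↔ c = q i - p i ∧ ∀ j, j ≠ i → p j = q j := by
    constructor
    · rintro rfl
      exact ⟨by simp, fun j hj => by simp [hj]⟩
    · rintro ⟨rfl, h⟩
      funext j
      by_cases hj : j = i
      · subst hj; simp
      · simp [hj, h j hj]
  have hzPow (c : ℕ) : zPow F n V p (Pi.single i c) = z F n V i ^ (((p i : ℕ) + c) / n) := by
    rw [zPow, Fintype.prod_eq_single i fun j hj => by
      rw [Pi.single_eq_of_ne hj, add_zero, Nat.div_eq_of_lt (p j).2, pow_zero], Pi.single_eq_same]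
  simp only [genericElement, map_sum, twistedRep, Finsupp.lsum_single, Matrix.sum_apply,
    twistedMonomial_apply, hcast, hcond, ite_and, Finset.sum_ite_eq', Finset.mem_univ, if_true]
  congr 1
  simp [hzPow, slotEmbed, embedCoeff, shift, shiftIdx]

theorem kronecker_mulSingle_genericMatrix (i : ι) (x : V i) :
    kronecker F n V (Pi.mulSingle i (Matrix.of fun a b => X (x, a, b))) =
      twistedRep F n V (genericElement F n V i x) :=
  Matrix.ext fun p q => by
    rw [kronecker_mulSingle_apply, twistedRep_genericElement_apply, Matrix.of_apply]

theorem tensorEmbed_injective : Function.Injective (tensorEmbed F n V) := by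
  have hfactor : (tensorEmbed F n V).toLinearMap = PiTensorProduct.lift (kronecker F n V) ∘ₗ
      PiTensorProduct.map fun i => (genericMatrixHom F (V i) n).range.val.toLinearMap :=
    PiTensorProduct.ext <| MultilinearMap.ext fun a => by
      simp [tensorEmbed_tprod, PiTensorProduct.map_tprod]
  rw [← AlgHom.coe_toLinearMap, hfactor, LinearMap.coe_comp]
  exact lift_kronecker_injective.comp (PiTensorProduct.map_injective_s9 fun i => Subtype.val_injective)

theorem tensorEmbed_range_le : (tensorEmbed F n V).range ≤ twistedRange F n V := by
  refine PiTensorProduct.range_le_of_forall_singleAlgHom_mem fun i a => ?_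
  let ψ := ((tensorEmbed F n V).comp (PiTensorProduct.singleAlgHom i)).comp
    (genericMatrixHom F (V i) n).rangeRestrict
  have hψ : ψ.range ≤ twistedRange F n V := by
    rw [← FreeAlgebra.lift_comp_ι ψ, ← Algebra.adjoin_range_eq_range_freeAlgebra_lift]
    refine Algebra.adjoin_le (Set.range_subset_iff.mpr fun x => ⟨genericElement F n V i x, ?_⟩)
    rw [Function.comp_apply, AlgHom.comp_apply, AlgHom.comp_apply, tensorEmbed_singleAlgHom,
      ← kronecker_mulSingle_genericMatrix, AlgHom.coe_codRestrict, genericMatrixHom,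
      FreeAlgebra.lift_ι_apply]
  obtain ⟨w, rfl⟩ := AlgHom.rangeRestrict_surjective _ a
  exact hψ ⟨w, rfl⟩

end Kronecker

end TensorGenericMatrix

theorem tensor_genericMatrixAlgebras_isDomain_general
    (F : Type*) [Field F] (k : ℕ) (X : Fin k → Type*) (n : ℕ) (hn : 1 ≤ n) :
    Nontrivial (⨂[F] i, (genericMatrixHom F (X i) n).range) ∧
    ∀ a b : ⨂[F] i, (genericMatrixHom F (X i) n).range,
      a ≠ 0 → b ≠ 0 → a * b ≠ 0 := by
  have : NeZero n := ⟨by omega⟩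
  let φ := (TensorGenericMatrix.tensorEmbed F n X).codRestrict _ fun t =>
    TensorGenericMatrix.tensorEmbed_range_le ⟨t, rfl⟩
  have hφ : Function.Injective φ := fun s t h =>
    TensorGenericMatrix.tensorEmbed_injective (congrArg Subtype.val h)
  have := hφ.noZeroDivisors φ (map_zero φ) (map_mul φ)
  exact ⟨(TensorGenericMatrix.tensorEmbed F n X).toRingHom.domain_nontrivial,
    fun a b ha hb => mul_ne_zero ha hb⟩

/-- For an infinite field `F`, pairwise disjoint nonempty sets of variables
`X₁, …, X_k` and `n ≥ 1`, the tensor product of generic matrix algebras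
`Fₙ⟨X₁⟩ ⊗_F ⋯ ⊗_F Fₙ⟨X_k⟩` is a domain: it is a nontrivial ring in which the
product of any two nonzero elements is nonzero. -/
theorem tensor_genericMatrixAlgebras_isDomain
    (F : Type*) [Field F] [Infinite F] (k : ℕ) (X : Fin k → Type*)
    [∀ i, Nonempty (X i)] (n : ℕ) (hn : 1 ≤ n) :
    Nontrivial (⨂[F] i, (genericMatrixHom F (X i) n).range) ∧
    ∀ a b : ⨂[F] i, (genericMatrixHom F (X i) n).range,
      a ≠ 0 → b ≠ 0 → a * b ≠ 0 :=
  tensor_genericMatrixAlgebras_isDomain_general F k X n hn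
end

section
/- Let D be a division ring, n ≥ 1, M ∈ Mₙ(D) an n×n matrix, α ∈ D^{1×n} a row vector and η ∈ D^{n×1} a column vector. If α Mˡ η = 0 for every l ∈ {0, 1, …, n−1}, then α Mˡ η = 0 for every l ∈ ℕ. -/
/-!
The Krylov spaces `span {α, α M, …, α Mᵏ⁻¹}` form an increasing chain in `Dⁿ`, so two consecutive
ones coincide for some `k ≤ n`. That space is then `M`-invariant, hence contains every `α Mˡ`,
while the hypothesis puts it inside the kernel of `v ↦ v ⬝ᵥ η`.
-/

open Module Submodule Matrix

theorem Submodule.exists_le_finrank_eq_succ_of_monotone {K V : Type*} [DivisionRing K]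
    [AddCommGroup V] [Module K V] [FiniteDimensional K V] {W : ℕ → Submodule K V}
    (hW : Monotone W) : ∃ k ≤ finrank K V, W k = W (k + 1) := by
  by_contra! hne
  have hrank : ∀ k ≤ finrank K V + 1, k ≤ finrank K (W k) := by
    intro k hk
    induction k with
    | zero => exact Nat.zero_le _
    | succ k ih =>
      have hlt : W k < W (k + 1) := (hW k.le_succ).lt_of_ne (hne k (by omega))
      exact (ih (by omega)).trans_lt (finrank_lt_finrank_of_lt hlt)
  have := (hrank _ le_rfl).trans (finrank_le (W (finrank K V + 1)))
  omega

namespace Module.End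

variable {K V : Type*} [DivisionRing K] [AddCommGroup V] [Module K V] (f : End K V) (v : V)

def krylov (k : ℕ) : Submodule K V :=
  span K ((fun i => (f ^ i) v) '' Set.Iio k)

variable {f v}

theorem pow_apply_mem_krylov {i k : ℕ} (h : i < k) : (f ^ i) v ∈ krylov f v k :=
  subset_span ⟨i, h, rfl⟩

variable (f v) in
theorem krylov_mono : Monotone (krylov f v) := fun _ _ hab =>
  span_mono (Set.image_mono fun _ hi => lt_of_lt_of_le hi hab)

theorem krylov_le_comap_succ (k : ℕ) : krylov f v k ≤ (krylov f v (k + 1)).comap f := by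
  rw [krylov, span_le]
  rintro _ ⟨i, hi, rfl⟩
  rw [SetLike.mem_coe, mem_comap, ← mul_apply, ← pow_succ']
  exact pow_apply_mem_krylov (Nat.succ_lt_succ hi)

theorem pow_apply_mem_krylov_of_eq_succ {k : ℕ} (hk : krylov f v k = krylov f v (k + 1))
    (l : ℕ) : (f ^ l) v ∈ krylov f v k := by
  induction l with
  | zero => exact hk ▸ pow_apply_mem_krylov k.succ_pos
  | succ l ih =>
    rw [pow_succ', mul_apply]
    exact hk ▸ krylov_le_comap_succ k ih

theorem pow_apply_mem_krylov_finrank [FiniteDimensional K V] (l : ℕ) :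
    (f ^ l) v ∈ krylov f v (finrank K V) := by
  obtain ⟨k, hkn, hk⟩ := exists_le_finrank_eq_succ_of_monotone (krylov_mono f v)
  exact krylov_mono f v hkn (pow_apply_mem_krylov_of_eq_succ hk l)

theorem map_pow_apply_eq_zero_of_forall_lt_finrank [FiniteDimensional K V] {W : Type*}
    [AddCommGroup W] [Module K W] {φ : V →ₗ[K] W}
    (h : ∀ i < finrank K V, φ ((f ^ i) v) = 0) (l : ℕ) : φ ((f ^ l) v) = 0 := by
  have hker : krylov f v (finrank K V) ≤ LinearMap.ker φ := by
    rw [krylov, span_le]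
    rintro _ ⟨i, hi, rfl⟩
    exact h i hi
  exact hker (pow_apply_mem_krylov_finrank l)

end Module.End

theorem Matrix.vecMulLinear_pow_apply {R n : Type*} [Semiring R] [Fintype n] [DecidableEq n]
    (M : Matrix n n R) (v : n → R) (l : ℕ) : (M.vecMulLinear ^ l) v = v ᵥ* M ^ l := by
  induction l with
  | zero => simp
  | succ l ih =>
    rw [pow_succ', Module.End.mul_apply, ih, pow_succ, vecMulLinear_apply, vecMul_vecMul]

theorem weighted_automaton_zeroness_general (D : Type*) [DivisionRing D] (n : ℕ)
    (M : Matrix (Fin n) (Fin n) D) (α η : Fin n → D)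
    (h : ∀ l < n, dotProduct (Matrix.vecMul α (M ^ l)) η = 0) :
    ∀ l : ℕ, dotProduct (Matrix.vecMul α (M ^ l)) η = 0 := by
  have dot_eq : ∀ v, (dotProductBilin D Dᵐᵒᵖ).flip η v = v ⬝ᵥ η := fun _ => rfl
  simp only [← vecMulLinear_pow_apply, ← dot_eq] at h ⊢
  exact Module.End.map_pow_apply_eq_zero_of_forall_lt_finrank (by rwa [finrank_fin_fun])

/-- **Zeroness criterion for weighted automata over a division ring.**
Let `D` be a (not necessarily commutative) division ring, `n ≥ 1`,
`M ∈ Mₙ(D)`, `α` a row vector and `η` a column vector over `D`.  If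
`α Mˡ η = 0` for every `l ∈ {0, 1, …, n − 1}`, then `α Mˡ η = 0` for every
`l ∈ ℕ`. -/
theorem weighted_automaton_zeroness (D : Type*) [DivisionRing D] (n : ℕ) (hn : 1 ≤ n)
    (M : Matrix (Fin n) (Fin n) D) (α η : Fin n → D)
    (h : ∀ l < n, dotProduct (Matrix.vecMul α (M ^ l)) η = 0) :
    ∀ l : ℕ, dotProduct (Matrix.vecMul α (M ^ l)) η = 0 :=
  weighted_automaton_zeroness_general D n M α η h
end

section
/- Let U be a finite set of size m ≥ 1 and let 𝓕 be a nonempty family of subsets of U. For a function w : U → {1, …, 2m}, define the weight of a set T ∈ 𝓕 to be Σ_{u ∈ T} w(u), and call w isolating if exactly one member of 𝓕 attains the minimum weight over 𝓕. Then the number of isolating functions w : U → {1, …, 2m} is at least (2m)^m / 2; equivalently, a uniformly random such w is isolating with probability at least 1/2. -/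
open scoped Classical

private lemma isolation_lemma_aux (G B N : ℕ) (h1 : G + B = N) (h2 : 2 * B ≤ N) :
    N ≤ 2 * G := by omega

/-- **Isolation lemma (Mulmuley–Vazirani–Vazirani).**
Let `U` be a finite set of size `m ≥ 1` and `𝓕` a nonempty family of subsets of
`U`.  Call a weight function `w : U → {1, …, 2m}` *isolating* if exactly one
member of `𝓕` attains the minimum weight `Σ_{u ∈ T} w u` over `T ∈ 𝓕`.  Then at
least `(2m)^m / 2` of the `(2m)^m` functions `w : U → {1, …, 2m}` are isolating;
equivalently, a uniformly random such `w` is isolating with probability at least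
`1/2`. -/
theorem isolation_lemma (U : Type*) [Fintype U] (m : ℕ) (hm : 1 ≤ m)
    (hU : Fintype.card U = m) (𝓕 : Finset (Finset U)) (h𝓕 : 𝓕.Nonempty) :
    (2 * m) ^ m ≤ 2 *
      ((Fintype.piFinset fun _ : U => Finset.Icc 1 (2 * m)).filter
        (fun w : U → ℕ => ∃! T : Finset U, T ∈ 𝓕 ∧
          ∀ T' ∈ 𝓕, ∑ u ∈ T, w u ≤ ∑ u ∈ T', w u)).card := by
  classical
  have hIcc : (Finset.Icc 1 (2 * m)).card = 2 * m := by
    rw [Nat.card_Icc]; omega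
  set Ω : Finset (U → ℕ) := Fintype.piFinset fun _ : U => Finset.Icc 1 (2 * m) with hΩdef
  have hΩcard : Ω.card = (2 * m) ^ m := by
    rw [hΩdef, Fintype.card_piFinset]
    simp [hIcc, hU]
  set P : (U → ℕ) → Prop := fun w => ∃! T : Finset U, T ∈ 𝓕 ∧
      ∀ T' ∈ 𝓕, ∑ u ∈ T, w u ≤ ∑ u ∈ T', w u with hPdef
  set Sing : U → (U → ℕ) → Prop := fun u w => ∃ T₁, T₁ ∈ 𝓕 ∧ ∃ T₂, T₂ ∈ 𝓕 ∧
      (∀ T' ∈ 𝓕, ∑ x ∈ T₁, w x ≤ ∑ x ∈ T', w x) ∧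
      (∀ T' ∈ 𝓕, ∑ x ∈ T₂, w x ≤ ∑ x ∈ T', w x) ∧ u ∈ T₁ ∧ u ∉ T₂ with hSdef
  set Bad : U → Finset (U → ℕ) := fun u => Ω.filter (Sing u) with hBdef
  -- if u is singular for both w and w' which agree off u, then w' u ≤ w u
  have key : ∀ (u : U) (w w' : U → ℕ), (∀ x, x ≠ u → w x = w' x) →
      Sing u w → Sing u w' → w' u ≤ w u := by
    intro u w w' hagree hw hw'
    obtain ⟨T₁, hT₁, T₂, hT₂, hmin₁, hmin₂, hu₁, hu₂⟩ := hw
    obtain ⟨T₁', hT₁', T₂', hT₂', hmin₁', hmin₂', hu₁', hu₂'⟩ := hw'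
    have hsame : ∀ S : Finset U, u ∉ S → ∑ x ∈ S, w x = ∑ x ∈ S, w' x := by
      intro S hS
      exact Finset.sum_congr rfl fun x hx => hagree x (by rintro rfl; exact hS hx)
    have hMM' : ∑ x ∈ T₁, w x ≤ ∑ x ∈ T₁', w' x := by
      calc ∑ x ∈ T₁, w x ≤ ∑ x ∈ T₂', w x := hmin₁ _ hT₂'
        _ = ∑ x ∈ T₂', w' x := hsame _ hu₂'
        _ ≤ ∑ x ∈ T₁', w' x := hmin₂' _ hT₁'
    have hM'M : ∑ x ∈ T₁', w' x ≤ ∑ x ∈ T₁, w x := by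
      calc ∑ x ∈ T₁', w' x ≤ ∑ x ∈ T₂, w' x := hmin₁' _ hT₂
        _ = ∑ x ∈ T₂, w x := (hsame _ hu₂).symm
        _ ≤ ∑ x ∈ T₁, w x := hmin₂ _ hT₁
    have h1 : ∑ x ∈ T₁, w x ≤ ∑ x ∈ T₁', w x := hmin₁ _ hT₁'
    have h2 : w u + ∑ x ∈ T₁'.erase u, w x = ∑ x ∈ T₁', w x :=
      Finset.add_sum_erase _ _ hu₁'
    have h3 : w' u + ∑ x ∈ T₁'.erase u, w' x = ∑ x ∈ T₁', w' x :=
      Finset.add_sum_erase _ _ hu₁'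
    have h4 : ∑ x ∈ T₁'.erase u, w x = ∑ x ∈ T₁'.erase u, w' x :=
      hsame _ (fun h => (Finset.mem_erase.mp h).1 rfl)
    omega
  have hcardBad : ∀ u : U, (Bad u).card ≤ (2 * m) ^ (m - 1) := by
    intro u
    set Ω' : Finset (U → ℕ) :=
      Fintype.piFinset (fun x => if x = u then {1} else Finset.Icc 1 (2 * m)) with hΩ'def
    have hΩ'card : Ω'.card = (2 * m) ^ (m - 1) := by
      rw [hΩ'def, Fintype.card_piFinset]
      rw [← Finset.mul_prod_erase Finset.univ _ (Finset.mem_univ u)]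
      have : ∀ x ∈ Finset.univ.erase u,
          ((if x = u then ({1} : Finset ℕ) else Finset.Icc 1 (2 * m))).card = 2 * m := by
        intro x hx
        rw [if_neg (Finset.mem_erase.mp hx).1, hIcc]
      rw [Finset.prod_congr rfl this, Finset.prod_const, if_pos rfl,
        Finset.card_erase_of_mem (Finset.mem_univ u), ← hU]
      simp [Finset.card_univ]
    have hmaps : ∀ w ∈ Bad u, Function.update w u 1 ∈ Ω' := by
      intro w hw
      have hwΩ : w ∈ Ω := (Finset.mem_filter.mp hw).1
      rw [hΩ'def, Fintype.mem_piFinset]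
      intro x
      by_cases hx : x = u
      · subst hx; simp [Function.update_self]
      · rw [Function.update_of_ne hx, if_neg hx]
        exact Fintype.mem_piFinset.mp hwΩ x
    have hinj : Set.InjOn (fun w : U → ℕ => Function.update w u 1) (Bad u) := by
      intro w hw w' hw' heq
      have hagree : ∀ x, x ≠ u → w x = w' x := by
        intro x hx
        have := congrFun heq x
        simpa [Function.update_of_ne hx] using this
      have hSw : Sing u w := (Finset.mem_filter.mp hw).2
      have hSw' : Sing u w' := (Finset.mem_filter.mp hw').2
      have h1 : w' u ≤ w u := key u w w' hagree hSw hSw'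
      have h2 : w u ≤ w' u := key u w' w (fun x hx => (hagree x hx).symm) hSw' hSw
      funext x
      by_cases hx : x = u
      · subst hx; omega
      · exact hagree x hx
    calc (Bad u).card ≤ Ω'.card := Finset.card_le_card_of_injOn _ hmaps hinj
      _ = (2 * m) ^ (m - 1) := hΩ'card
  -- every non-isolating w lies in some Bad u
  have hsub : Ω.filter (fun w => ¬ P w) ⊆ Finset.univ.biUnion Bad := by
    intro w hw
    obtain ⟨hwΩ, hnP⟩ := Finset.mem_filter.mp hw
    obtain ⟨T, hT, hTmin⟩ := Finset.exists_min_image 𝓕 (fun T => ∑ x ∈ T, w x) h𝓕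
    have hnot : ¬ ∀ y, (y ∈ 𝓕 ∧ ∀ T' ∈ 𝓕, ∑ u ∈ y, w u ≤ ∑ u ∈ T', w u) → y = T := by
      intro hall
      exact hnP ⟨T, ⟨hT, hTmin⟩, hall⟩
    push_neg at hnot
    obtain ⟨T₂, ⟨hT₂, hT₂min⟩, hne⟩ := hnot
    have hdiff : (∃ v ∈ T, v ∉ T₂) ∨ (∃ v ∈ T₂, v ∉ T) := by
      by_contra h
      push_neg at h
      exact hne (Finset.Subset.antisymm h.2 h.1)
    rcases hdiff with ⟨v, hv1, hv2⟩ | ⟨v, hv1, hv2⟩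
    · exact Finset.mem_biUnion.mpr ⟨v, Finset.mem_univ v,
        Finset.mem_filter.mpr ⟨hwΩ, T, hT, T₂, hT₂, hTmin, hT₂min, hv1, hv2⟩⟩
    · exact Finset.mem_biUnion.mpr ⟨v, Finset.mem_univ v,
        Finset.mem_filter.mpr ⟨hwΩ, T₂, hT₂, T, hT, hT₂min, hTmin, hv1, hv2⟩⟩
  have hbadcard : (Ω.filter (fun w => ¬ P w)).card ≤ m * (2 * m) ^ (m - 1) := by
    calc (Ω.filter (fun w => ¬ P w)).card ≤ (Finset.univ.biUnion Bad).card :=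
          Finset.card_le_card hsub
      _ ≤ ∑ u : U, (Bad u).card := Finset.card_biUnion_le
      _ ≤ ∑ _u : U, (2 * m) ^ (m - 1) := Finset.sum_le_sum fun u _ => hcardBad u
      _ = m * (2 * m) ^ (m - 1) := by rw [Finset.sum_const, Finset.card_univ, hU, smul_eq_mul]
  have hsplit : (Ω.filter P).card + (Ω.filter (fun w => ¬ P w)).card = Ω.card :=
    Finset.card_filter_add_card_filter_not (p := P)
  have hpow : 2 * (m * (2 * m) ^ (m - 1)) = (2 * m) ^ m := by
    have hsucc : m - 1 + 1 = m := by omega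
    calc 2 * (m * (2 * m) ^ (m - 1)) = (2 * m) ^ (m - 1) * (2 * m) := by ring
      _ = (2 * m) ^ (m - 1 + 1) := (pow_succ _ _).symm
      _ = (2 * m) ^ m := by rw [hsucc]
  have hgoal : (Ω.filter P).card = ((Fintype.piFinset fun _ : U => Finset.Icc 1 (2 * m)).filter
        (fun w : U → ℕ => ∃! T : Finset U, T ∈ 𝓕 ∧
          ∀ T' ∈ 𝓕, ∑ u ∈ T, w u ≤ ∑ u ∈ T', w u)).card := rfl
  have h2B : 2 * (Ω.filter (fun w => ¬ P w)).card ≤ (2 * m) ^ m := by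
    calc 2 * (Ω.filter (fun w => ¬ P w)).card ≤ 2 * (m * (2 * m) ^ (m - 1)) :=
        Nat.mul_le_mul_left 2 hbadcard
      _ = (2 * m) ^ m := hpow
  rw [hΩcard] at hsplit
  rw [← hgoal]
  exact isolation_lemma_aux _ _ _ hsplit h2B
end
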